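/- arXiv:1305.6061 — 9 statements merged into one kernel-verified Lean document; each statement's English description precedes it below -/
import Mathlib

section
/- Fix real constants β > 0 and L > 0. Let x : ℝ → ℝ³ be a smooth curve with ‖x'(s)‖ = 1 for all s in a neighborhood of [0,L], and suppose its curvature κ(s) := ‖x''(s)‖ is strictly positive for all s ∈ [0,L]. Define the unit normal N(s) := x''(s)/κ(s), the unit binormal B(s) := x'(s) × N(s), the torsion τ(s) := N'(s) · B(s), and w(s) := κ(s)/√(κ(s)² + β²). Then for every smooth function δ : ℝ → ℝ with compact support contained in (0,L), the function h ↦ E(x + h·δ·N) is differentiable at h = 0, and its derivative there equals ∫₀ᴸ δ(s) ( w''(s) − w(s)(τ(s)² + β²) ) ds. (In particular, a stationary curve of E under normal perturbations satisfies (d²/ds²)(κ/√(κ²+β²)) = (κ/√(κ²+β²))(τ² + β²).) -/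
/-- The cross product on `ℝ³ = EuclideanSpace ℝ (Fin 3)`. -/
noncomputable def cross3 (a b : EuclideanSpace ℝ (Fin 3)) : EuclideanSpace ℝ (Fin 3) :=
  (WithLp.equiv 2 (Fin 3 → ℝ)).symm
    ![a 1 * b 2 - a 2 * b 1, a 2 * b 0 - a 0 * b 2, a 0 * b 1 - a 1 * b 0]

/-- The elastica energy `E(y) = ∫₀ᴸ √(‖y'×y''‖²/‖y'‖⁴ + β²‖y'‖²) dt`, the
parametrization-invariant form of `∫ √(κ² + β²) ds`. -/
noncomputable def elasticaEnergy (β L : ℝ) (y : ℝ → EuclideanSpace ℝ (Fin 3)) : ℝ :=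
  ∫ t in (0:ℝ)..L,
    Real.sqrt (‖cross3 (deriv y t) (deriv (deriv y) t)‖ ^ 2 / ‖deriv y t‖ ^ 4
      + β ^ 2 * ‖deriv y t‖ ^ 2)

open RealInnerProductSpace

namespace Elastica

abbrev E3 := EuclideanSpace ℝ (Fin 3)

lemma cross3_0 (a b : E3) : cross3 a b 0 = a 1 * b 2 - a 2 * b 1 := rfl
lemma cross3_1 (a b : E3) : cross3 a b 1 = a 2 * b 0 - a 0 * b 2 := rfl
lemma cross3_2 (a b : E3) : cross3 a b 2 = a 0 * b 1 - a 1 * b 0 := rfl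

lemma inner3 (a b : E3) : ⟪a, b⟫ = a 0 * b 0 + a 1 * b 1 + a 2 * b 2 := by
  simp [PiLp.inner_apply, RCLike.inner_apply, Fin.sum_univ_three]
  ring

lemma ext3 {a b : E3} (h0 : a 0 = b 0) (h1 : a 1 = b 1) (h2 : a 2 = b 2) : a = b := by
  ext i
  fin_cases i <;> assumption

lemma smul3 (r : ℝ) (a : E3) (i : Fin 3) : (r • a) i = r * a i := rfl
lemma add3 (a b : E3) (i : Fin 3) : (a + b) i = a i + b i := rfl
lemma sub3 (a b : E3) (i : Fin 3) : (a - b) i = a i - b i := rfl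
lemma neg3 (a : E3) (i : Fin 3) : (-a) i = -(a i) := rfl

lemma cross3_lagrange (a b c d : E3) :
    ⟪cross3 a b, cross3 c d⟫ = ⟪a, c⟫ * ⟪b, d⟫ - ⟪a, d⟫ * ⟪b, c⟫ := by
  simp only [inner3, cross3_0, cross3_1, cross3_2]; ring

lemma cross3_triple (a b c : E3) :
    cross3 a (cross3 b c) = ⟪a, c⟫ • b - ⟪a, b⟫ • c := by
  refine ext3 ?_ ?_ ?_ <;>
    simp only [inner3, cross3_0, cross3_1, cross3_2, sub3, smul3] <;> ring

lemma cross3_anticomm (a b : E3) : cross3 a b = -cross3 b a := by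
  refine ext3 ?_ ?_ ?_ <;>
    simp only [cross3_0, cross3_1, cross3_2, neg3] <;> ring

lemma cross3_smul_right (r : ℝ) (a b : E3) : cross3 a (r • b) = r • cross3 a b := by
  refine ext3 ?_ ?_ ?_ <;>
    simp only [cross3_0, cross3_1, cross3_2, smul3] <;> ring

lemma cross3_sub_right (a b c : E3) : cross3 a (b - c) = cross3 a b - cross3 a c := by
  refine ext3 ?_ ?_ ?_ <;>
    simp only [cross3_0, cross3_1, cross3_2, sub3] <;> ring

/-- Decomposition of a vector in the orthonormal frame `T, N, T × N`. -/
lemma frame_decomp {T N : E3} (hT : ⟪T, T⟫ = 1) (hN : ⟪N, N⟫ = 1) (hTN : ⟪T, N⟫ = 0)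
    (v : E3) : v = ⟪v, T⟫ • T + ⟪v, N⟫ • N + ⟪v, cross3 T N⟫ • cross3 T N := by
  set B := cross3 T N with hB
  have h1 : cross3 B (cross3 v B) = ⟪B, B⟫ • v - ⟪B, v⟫ • B := cross3_triple ..
  have hBB : ⟪B, B⟫ = 1 := by
    rw [hB, cross3_lagrange, hT, hN, hTN]; ring
  have h2 : cross3 v B = ⟪v, N⟫ • T - ⟪v, T⟫ • N := by rw [hB, cross3_triple]
  have hBT : cross3 B T = N := by
    rw [cross3_anticomm, hB, cross3_triple, hTN, hT]
    module
  have hBN : cross3 B N = -T := by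
    rw [cross3_anticomm, hB, cross3_triple, hN, real_inner_comm T N, hTN]
    module
  have key := h1
  rw [h2, cross3_sub_right, cross3_smul_right, cross3_smul_right, hBT, hBN, hBB] at key
  rw [real_inner_comm B v]
  linear_combination (norm := module) -key


lemma frame_parseval {T N : E3} (hT : ⟪T, T⟫ = 1) (hN : ⟪N, N⟫ = 1) (hTN : ⟪T, N⟫ = 0)
    (v : E3) : ⟪v, v⟫ = ⟪v, T⟫ ^ 2 + ⟪v, N⟫ ^ 2 + ⟪v, cross3 T N⟫ ^ 2 := by
  have h := congrArg (fun u => (⟪v, u⟫ : ℝ)) (frame_decomp hT hN hTN v)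
  simp only [inner_add_right, real_inner_smul_right] at h
  rw [h]; ring

noncomputable def crossL : E3 →L[ℝ] E3 →L[ℝ] E3 :=
  LinearMap.toContinuousLinearMap
  { toFun := fun a => LinearMap.toContinuousLinearMap
      { toFun := fun b => cross3 a b
        map_add' := fun b c => by
          refine ext3 ?_ ?_ ?_ <;>
            simp only [cross3_0, cross3_1, cross3_2, add3] <;> ring
        map_smul' := fun r b => by
          refine ext3 ?_ ?_ ?_ <;>
            simp only [cross3_0, cross3_1, cross3_2, smul3, RingHom.id_apply] <;> ring }
    map_add' := fun a b => by
      apply ContinuousLinearMap.ext; intro c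
      show cross3 (a + b) c = cross3 a c + cross3 b c
      refine ext3 ?_ ?_ ?_ <;>
        simp only [cross3_0, cross3_1, cross3_2, add3] <;> ring
    map_smul' := fun r a => by
      apply ContinuousLinearMap.ext; intro c
      show cross3 (r • a) c = r • cross3 a c
      refine ext3 ?_ ?_ ?_ <;>
        simp only [cross3_0, cross3_1, cross3_2, smul3] <;> ring }

lemma crossL_apply (a b : E3) : crossL a b = cross3 a b := rfl

lemma hasDerivAt_cross {p q : ℝ → E3} {p' q' : E3} {t : ℝ}
    (hp : HasDerivAt p p' t) (hq : HasDerivAt q q' t) :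
    HasDerivAt (fun s => cross3 (p s) (q s)) (cross3 p' (q t) + cross3 (p t) q') t := by
  have h1 : HasDerivAt (fun s => crossL (p s)) (crossL p') t :=
    crossL.hasFDerivAt.comp_hasDerivAt t hp
  simpa only [crossL_apply] using h1.clm_apply hq

lemma contDiff_cross : ContDiff ℝ (⊤ : ℕ∞) (fun p : E3 × E3 => cross3 p.1 p.2) :=
  crossL.isBoundedBilinearMap.contDiff

lemma _root_.Continuous.cross3' {α : Type*} [TopologicalSpace α] {f g : α → E3}
    (hf : Continuous f) (hg : Continuous g) : Continuous (fun a => cross3 (f a) (g a)) :=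
  contDiff_cross.continuous.comp (hf.prodMk hg)

lemma _root_.ContinuousOn.cross3' {α : Type*} [TopologicalSpace α] {f g : α → E3} {s : Set α}
    (hf : ContinuousOn f s) (hg : ContinuousOn g s) :
    ContinuousOn (fun a => cross3 (f a) (g a)) s :=
  contDiff_cross.continuous.comp_continuousOn (hf.prodMk hg)

end Elastica

open Elastica RealInnerProductSpace MeasureTheory Set ContDiff Interval

set_option maxHeartbeats 2000000

/-- first variation of the elastica energy under normal perturbations:
for a smooth unit-speed curve `x` with positive curvature `κ` on `[0,L]`, normal `N`,
binormal `B`, torsion `τ` and `w = κ/√(κ²+β²)`, and any smooth `δ` compactly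
supported in `(0,L)`, the map `h ↦ E(x + hδN)` has derivative
`∫₀ᴸ δ(s)(w''(s) − w(s)(τ(s)² + β²)) ds` at `h = 0`. -/
theorem stmt_0 (β L : ℝ) (hβ : 0 < β) (hL : 0 < L)
    (x : ℝ → EuclideanSpace ℝ (Fin 3)) (hx : ContDiff ℝ (⊤ : ℕ∞) x)
    (U : Set ℝ) (hU : IsOpen U) (hUL : Set.Icc 0 L ⊆ U)
    (hunit : ∀ s ∈ U, ‖deriv x s‖ = 1)
    (κ : ℝ → ℝ) (hκdef : ∀ s, κ s = ‖deriv (deriv x) s‖)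
    (hκpos : ∀ s ∈ Set.Icc (0 : ℝ) L, 0 < κ s)
    (N B : ℝ → EuclideanSpace ℝ (Fin 3)) (τ w : ℝ → ℝ)
    (hN : ∀ s, N s = (κ s)⁻¹ • deriv (deriv x) s)
    (hB : ∀ s, B s = cross3 (deriv x s) (N s))
    (hτ : ∀ s, τ s = (inner ℝ (deriv N s) (B s) : ℝ))
    (hw : ∀ s, w s = κ s / Real.sqrt (κ s ^ 2 + β ^ 2))
    (δ : ℝ → ℝ) (hδ : ContDiff ℝ (⊤ : ℕ∞) δ)
    (hδc : HasCompactSupport δ) (hδsupp : tsupport δ ⊆ Set.Ioo 0 L) :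
    HasDerivAt (fun h : ℝ => elasticaEnergy β L (fun s => x s + (h * δ s) • N s))
      (∫ s in (0:ℝ)..L, δ s * (deriv (deriv w) s - w s * (τ s ^ 2 + β ^ 2))) 0 := by
  have hone : (∞ : WithTop ℕ∞) ≠ 0 := by simp
  have hsucc : (∞ : WithTop ℕ∞) + 1 ≤ ∞ := by exact_mod_cast le_top
  replace hx : ContDiff ℝ ∞ x := hx.of_le (by simp)
  replace hδ : ContDiff ℝ ∞ δ := hδ.of_le (by simp)
  have hxd : Differentiable ℝ x := hx.differentiable hone
  have hx1 : ContDiff ℝ ∞ (deriv x) := (contDiff_infty_iff_deriv.mp hx).2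
  have hx1d : Differentiable ℝ (deriv x) := hx1.differentiable hone
  have hx2 : ContDiff ℝ ∞ (deriv (deriv x)) := (contDiff_infty_iff_deriv.mp hx1).2
  set x1 := deriv x with hx1def
  set x2 := deriv (deriv x) with hx2def
  -- κ is continuous
  have hκeq : κ = fun s => ‖x2 s‖ := funext hκdef
  have hκcont : Continuous κ := by rw [hκeq]; exact hx2.continuous.norm
  -- the open working set V
  set V : Set ℝ := U ∩ {s | 0 < κ s} with hVdef
  have hVopen : IsOpen V := hU.inter (isOpen_lt continuous_const hκcont)
  have hLV : Set.Icc 0 L ⊆ V := fun s hs => ⟨hUL hs, hκpos s hs⟩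
  have hκV : ∀ s ∈ V, 0 < κ s := fun s hs => hs.2
  have hκne : ∀ s ∈ V, κ s ≠ 0 := fun s hs => (hκV s hs).ne'
  have hUV : V ⊆ U := Set.inter_subset_left
  have hx2ne : ∀ s ∈ V, x2 s ≠ 0 := by
    intro s hs hc
    exact absurd (by rw [hκdef s, hc, norm_zero]) (hκne s hs)
  -- smoothness of κ, N on V
  have hκsm : ContDiffOn ℝ ∞ κ V := by
    rw [hκeq]; exact hx2.contDiffOn.norm ℝ hx2ne
  have hNsm : ContDiffOn ℝ ∞ N V :=
    ((hκsm.inv hκne).smul hx2.contDiffOn).congr (fun s _ => hN s)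
  have hNdiff : ∀ s ∈ V, DifferentiableAt ℝ N s := fun s hs =>
    ((hNsm.contDiffAt (hVopen.mem_nhds hs)).differentiableAt hone)
  set N1 := deriv N with hN1def
  have hN1sm : ContDiffOn ℝ ∞ N1 V := hNsm.deriv_of_isOpen hVopen hsucc
  have hN1diff : ∀ s ∈ V, DifferentiableAt ℝ N1 s := fun s hs =>
    ((hN1sm.contDiffAt (hVopen.mem_nhds hs)).differentiableAt hone)
  set N2 := deriv N1 with hN2def
  -- derivative of constant inner products
  have deriv_const_inner : ∀ (f g : ℝ → E3), (∀ u ∈ V, DifferentiableAt ℝ f u) →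
      (∀ u ∈ V, DifferentiableAt ℝ g u) → ∀ (c : ℝ), (∀ u ∈ V, ⟪f u, g u⟫ = c) →
      ∀ s ∈ V, ⟪f s, deriv g s⟫ + ⟪deriv f s, g s⟫ = 0 := by
    intro f g hf hg c hfg s hs
    have h1 : HasDerivAt (fun u => (⟪f u, g u⟫ : ℝ)) (⟪f s, deriv g s⟫ + ⟪deriv f s, g s⟫) s :=
      ((hf s hs).hasDerivAt).inner ℝ ((hg s hs).hasDerivAt)
    have he : (fun u => (⟪f u, g u⟫ : ℝ)) =ᶠ[nhds s] (fun _ => c) :=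
      Filter.eventually_of_mem (hVopen.mem_nhds hs) hfg
    have h2 : deriv (fun u => (⟪f u, g u⟫ : ℝ)) s = 0 := by
      rw [he.deriv_eq, deriv_const]
    rw [← h1.deriv]; exact h2
  -- frame identities
  have hx1x1 : ∀ s ∈ U, ⟪x1 s, x1 s⟫ = 1 := by
    intro s hs
    rw [real_inner_self_eq_norm_sq, hunit s hs]; norm_num
  have hx2x2 : ∀ s, ⟪x2 s, x2 s⟫ = κ s ^ 2 := by
    intro s
    rw [real_inner_self_eq_norm_sq, hκdef s]
  have hx1x2 : ∀ s ∈ V, ⟪x1 s, x2 s⟫ = 0 := by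
    intro s hs
    have h := deriv_const_inner x1 x1 (fun u _ => hx1d u) (fun u _ => hx1d u) 1
      (fun u hu => hx1x1 u (hUV hu)) s hs
    have hc := real_inner_comm (x1 s) (x2 s)
    linarith
  have hNunit : ∀ s ∈ V, ⟪N s, N s⟫ = 1 := by
    intro s hs
    rw [hN s, real_inner_smul_left, real_inner_smul_right, hx2x2 s]
    field_simp [hκne s hs]
  have hx2N : ∀ s ∈ V, x2 s = κ s • N s := by
    intro s hs
    rw [hN s, smul_smul, mul_inv_cancel₀ (hκne s hs), one_smul]
  have hx1N : ∀ s ∈ V, ⟪x1 s, N s⟫ = 0 := by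
    intro s hs
    rw [hN s, real_inner_smul_right, hx1x2 s hs, mul_zero]
  have hx1N1 : ∀ s ∈ V, ⟪x1 s, N1 s⟫ = -κ s := by
    intro s hs
    have h := deriv_const_inner x1 N (fun u _ => hx1d u) hNdiff 0 hx1N s hs
    have h2 : ⟪x2 s, N s⟫ = κ s := by
      rw [hx2N s hs, real_inner_smul_left, hNunit s hs, mul_one]
    linarith
  have hNN1 : ∀ s ∈ V, ⟪N s, N1 s⟫ = 0 := by
    intro s hs
    have h := deriv_const_inner N N hNdiff hNdiff 1 hNunit s hs
    have hc := real_inner_comm (N s) (N1 s)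
    linarith
  have hNN2 : ∀ s ∈ V, ⟪N s, N2 s⟫ = -(κ s ^ 2 + τ s ^ 2) := by
    intro s hs
    have h := deriv_const_inner N N1 hNdiff hN1diff 0 hNN1 s hs
    have hp := frame_parseval (hx1x1 s (hUV hs)) (hNunit s hs) (hx1N s hs) (N1 s)
    rw [real_inner_comm (x1 s) (N1 s), real_inner_comm (N s) (N1 s), ← hB s, ← hτ s,
      hx1N1 s hs, hNN1 s hs] at hp
    linear_combination h - hp
  -- the perturbation field
  set v : ℝ → E3 := fun s => δ s • N s with hvdef
  have hvsm : ContDiff ℝ ∞ v := by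
    rw [hvdef, contDiff_iff_contDiffAt]
    intro t
    by_cases ht : t ∈ V
    · exact hδ.contDiffAt.smul (hNsm.contDiffAt (hVopen.mem_nhds ht))
    · have htδ : t ∉ tsupport δ := fun hc => ht (hLV (Set.Ioo_subset_Icc_self (hδsupp hc)))
      have h0 : (fun s => δ s • N s) =ᶠ[nhds t] fun _ => (0 : E3) := by
        filter_upwards [notMem_tsupport_iff_eventuallyEq.mp htδ] with u hu
        simp [hu]
      exact (contDiffAt_const (c := (0 : E3))).congr_of_eventuallyEq h0
  have hvd : Differentiable ℝ v := hvsm.differentiable hone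
  have hv1 : ContDiff ℝ ∞ (deriv v) := (contDiff_infty_iff_deriv.mp hvsm).2
  have hv1d : Differentiable ℝ (deriv v) := hv1.differentiable hone
  have hv2 : ContDiff ℝ ∞ (deriv (deriv v)) := (contDiff_infty_iff_deriv.mp hv1).2
  set v1 := deriv v with hv1def
  set v2 := deriv v1 with hv2def
  set δ1 := deriv δ with hδ1def
  have hδd : Differentiable ℝ δ := hδ.differentiable hone
  have hδ1sm : ContDiff ℝ ∞ δ1 := (contDiff_infty_iff_deriv.mp hδ).2
  have hδ1d : Differentiable ℝ δ1 := hδ1sm.differentiable hone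
  set δ2 := deriv δ1 with hδ2def
  have hδ2sm : ContDiff ℝ ∞ δ2 := (contDiff_infty_iff_deriv.mp hδ1sm).2
  have hv1V : ∀ s ∈ V, v1 s = δ s • N1 s + δ1 s • N s := fun s hs =>
    ((hδd s).hasDerivAt.smul ((hNdiff s hs).hasDerivAt)).deriv
  have hv2V : ∀ s ∈ V, v2 s = (δ s • N2 s + δ1 s • N1 s) + (δ1 s • N1 s + δ2 s • N s) := by
    intro s hs
    have he : v1 =ᶠ[nhds s] fun u => δ u • N1 u + δ1 u • N u :=
      Filter.eventually_of_mem (hVopen.mem_nhds hs) hv1V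
    have hd : HasDerivAt (fun u => δ u • N1 u + δ1 u • N u)
        ((δ s • N2 s + δ1 s • N1 s) + (δ1 s • N1 s + δ2 s • N s)) s :=
      ((hδd s).hasDerivAt.smul ((hN1diff s hs).hasDerivAt)).add
        ((hδ1d s).hasDerivAt.smul ((hNdiff s hs).hasDerivAt))
    rw [hv2def, he.deriv_eq]; exact hd.deriv
  have hx1v1 : ∀ s ∈ V, ⟪x1 s, v1 s⟫ = -(κ s * δ s) := by
    intro s hs
    rw [hv1V s hs]
    simp only [inner_add_right, real_inner_smul_right]
    rw [hx1N1 s hs, hx1N s hs]; ring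
  have hNv2 : ∀ s ∈ V, ⟪N s, v2 s⟫ = δ2 s - δ s * (κ s ^ 2 + τ s ^ 2) := by
    intro s hs
    rw [hv2V s hs]
    simp only [inner_add_right, real_inner_smul_right]
    rw [hNN2 s hs, hNN1 s hs, hNunit s hs]; ring
  have hx2v2 : ∀ s ∈ V, ⟪x2 s, v2 s⟫ = κ s * (δ2 s - δ s * (κ s ^ 2 + τ s ^ 2)) := by
    intro s hs
    rw [hx2N s hs, real_inner_smul_left, hNv2 s hs]
  -- smoothness of w and τ on V
  have hκβpos : ∀ s : ℝ, 0 < κ s ^ 2 + β ^ 2 := fun s =>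
    add_pos_of_nonneg_of_pos (sq_nonneg (κ s)) (pow_pos hβ 2)
  have hwsm : ContDiffOn ℝ ∞ w V := by
    have h1 : ContDiffOn ℝ ∞ (fun s => κ s ^ 2 + β ^ 2) V := (hκsm.pow 2).add contDiffOn_const
    have h2 : ContDiffOn ℝ ∞ (fun s => Real.sqrt (κ s ^ 2 + β ^ 2)) V :=
      h1.sqrt (fun s _ => (hκβpos s).ne')
    exact (hκsm.div h2 (fun s _ => (Real.sqrt_pos.mpr (hκβpos s)).ne')).congr fun s _ => hw s
  have hw1sm : ContDiffOn ℝ ∞ (deriv w) V := hwsm.deriv_of_isOpen hVopen hsucc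
  have hw2sm : ContDiffOn ℝ ∞ (deriv (deriv w)) V := hw1sm.deriv_of_isOpen hVopen hsucc
  have hwdiff : ∀ s ∈ V, DifferentiableAt ℝ w s := fun s hs =>
    ((hwsm.contDiffAt (hVopen.mem_nhds hs)).differentiableAt hone)
  have hw1diff : ∀ s ∈ V, DifferentiableAt ℝ (deriv w) s := fun s hs =>
    ((hw1sm.contDiffAt (hVopen.mem_nhds hs)).differentiableAt hone)
  have hτcont : ContinuousOn τ V := by
    have : ContinuousOn (fun s => (⟪N1 s, B s⟫ : ℝ)) V :=
      hN1sm.continuousOn.inner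
        ((hx1.continuous.continuousOn.cross3' hNsm.continuousOn).congr fun s _ => hB s)
    exact this.congr fun s _ => hτ s
  -- the two-parameter functions
  set p : ℝ → ℝ → E3 := fun h t => x1 t + h • v1 t with hpdef
  set q : ℝ → ℝ → E3 := fun h t => x2 t + h • v2 t with hqdef
  set cf : ℝ → ℝ → E3 := fun h t => cross3 (p h t) (q h t) with hcdef
  set P : ℝ → ℝ → ℝ := fun h t => ⟪p h t, p h t⟫ with hPdef
  set C : ℝ → ℝ → ℝ := fun h t => ⟪cf h t, cf h t⟫ with hCdef
  set G : ℝ → ℝ → ℝ := fun h t => C h t / (P h t) ^ 2 + β ^ 2 * P h t with hGdef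
  set F : ℝ → ℝ → ℝ := fun h t => Real.sqrt (G h t) with hFdef
  set Pd : ℝ → ℝ → ℝ := fun h t => ⟪p h t, v1 t⟫ + ⟪v1 t, p h t⟫ with hPddef
  set cd : ℝ → ℝ → E3 := fun h t => cross3 (v1 t) (q h t) + cross3 (p h t) (v2 t) with hcddef
  set Cd : ℝ → ℝ → ℝ := fun h t => ⟪cf h t, cd h t⟫ + ⟪cd h t, cf h t⟫ with hCddef
  set Fd : ℝ → ℝ → ℝ := fun h t =>
    ((Cd h t * (P h t) ^ 2 - C h t * (2 * P h t * Pd h t)) / ((P h t) ^ 2) ^ 2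
      + β ^ 2 * Pd h t) / (2 * Real.sqrt (G h t)) with hFddef
  -- a bound on the perturbation speed and the radius ε
  obtain ⟨M, hM⟩ := isCompact_Icc.exists_bound_of_continuousOn
    (hv1.continuous.continuousOn (s := Icc (0:ℝ) L))
  have hM0 : 0 ≤ M := le_trans (norm_nonneg (v1 0)) (hM 0 ⟨le_refl _, hL.le⟩)
  set ε : ℝ := (2 * (M + 1))⁻¹ with hεdef
  have hε : 0 < ε := by rw [hεdef]; positivity
  have hpε : ∀ h : ℝ, |h| ≤ ε → ∀ t ∈ Icc (0:ℝ) L, 2⁻¹ ≤ ‖p h t‖ := by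
    intro h hh t ht
    have h1 : ‖x1 t‖ ≤ ‖p h t‖ + ‖h • v1 t‖ := by
      calc ‖x1 t‖ = ‖p h t - h • v1 t‖ := by rw [hpdef]; simp
      _ ≤ ‖p h t‖ + ‖h • v1 t‖ := norm_sub_le _ _
    have h2 : ‖h • v1 t‖ ≤ ε * M := by
      rw [norm_smul]; exact mul_le_mul hh (hM t ht) (norm_nonneg _) hε.le
    have h3 : ε * M ≤ 2⁻¹ := by
      rw [hεdef, inv_mul_le_iff₀ (by positivity)]
      nlinarith
    have hx1t : ‖x1 t‖ = 1 := hunit t (hUL ht)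
    linarith
  have hPpos : ∀ h : ℝ, |h| ≤ ε → ∀ t ∈ Icc (0:ℝ) L, 0 < P h t := by
    intro h hh t ht
    have h1 := hpε h hh t ht
    rw [hPdef]; dsimp only; rw [real_inner_self_eq_norm_sq]
    nlinarith
  have hGpos : ∀ h : ℝ, |h| ≤ ε → ∀ t ∈ Icc (0:ℝ) L, 0 < G h t := by
    intro h hh t ht
    exact add_pos_of_nonneg_of_pos
      (div_nonneg real_inner_self_nonneg (sq_nonneg _))
      (mul_pos (pow_pos hβ 2) (hPpos h hh t ht))
  -- pointwise differentiability in h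
  have hdiff : ∀ t ∈ Icc (0:ℝ) L, ∀ h : ℝ, |h| ≤ ε →
      HasDerivAt (fun y => F y t) (Fd h t) h := by
    intro t ht h hh
    have hden : P h t ≠ 0 := (hPpos h hh t ht).ne'
    have hp' : HasDerivAt (fun y : ℝ => p y t) (v1 t) h := by
      rw [hpdef]
      simpa using (hasDerivAt_id h).smul_const (v1 t)
    have hq' : HasDerivAt (fun y : ℝ => q y t) (v2 t) h := by
      rw [hqdef]
      simpa using (hasDerivAt_id h).smul_const (v2 t)
    have hc' : HasDerivAt (fun y : ℝ => cf y t) (cd h t) h := by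
      rw [hcdef, hcddef]
      exact hasDerivAt_cross hp' hq'
    have hP' : HasDerivAt (fun y : ℝ => P y t) (Pd h t) h := hp'.inner ℝ hp'
    have hC' : HasDerivAt (fun y : ℝ => C y t) (Cd h t) h := hc'.inner ℝ hc'
    have hP2 : HasDerivAt (fun y : ℝ => (P y t) ^ 2) (2 * P h t * Pd h t) h := by
      have := hP'.pow 2
      norm_num at this
      exact this
    have hdiv : HasDerivAt (fun y : ℝ => C y t / (P y t) ^ 2)
        ((Cd h t * (P h t) ^ 2 - C h t * (2 * P h t * Pd h t)) / ((P h t) ^ 2) ^ 2) h :=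
      hC'.div hP2 (pow_ne_zero 2 hden)
    have hG' : HasDerivAt (fun y : ℝ => G y t)
        ((Cd h t * (P h t) ^ 2 - C h t * (2 * P h t * Pd h t)) / ((P h t) ^ 2) ^ 2
          + β ^ 2 * Pd h t) h := by
      rw [hGdef]
      exact hdiv.add (hP'.const_mul (β ^ 2))
    have := hG'.sqrt (hGpos h hh t ht).ne'
    rw [hFdef, hFddef]
    simpa [div_eq_div_iff] using this
  -- joint continuity and a uniform bound for the derivative
  have hc_p : Continuous (fun z : ℝ × ℝ => p z.1 z.2) := by
    rw [hpdef]
    exact (hx1.continuous.comp continuous_snd).add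
      (continuous_fst.smul (hv1.continuous.comp continuous_snd))
  have hc_q : Continuous (fun z : ℝ × ℝ => q z.1 z.2) := by
    rw [hqdef]
    exact (hx2.continuous.comp continuous_snd).add
      (continuous_fst.smul (hv2.continuous.comp continuous_snd))
  have hc_v1 : Continuous (fun z : ℝ × ℝ => v1 z.2) := hv1.continuous.comp continuous_snd
  have hc_v2 : Continuous (fun z : ℝ × ℝ => v2 z.2) := hv2.continuous.comp continuous_snd
  have hc_c : Continuous (fun z : ℝ × ℝ => cf z.1 z.2) := by
    rw [hcdef]; exact hc_p.cross3' hc_q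
  have hc_P : Continuous (fun z : ℝ × ℝ => P z.1 z.2) := by
    rw [hPdef]; exact hc_p.inner hc_p
  have hc_C : Continuous (fun z : ℝ × ℝ => C z.1 z.2) := by
    rw [hCdef]; exact hc_c.inner hc_c
  have hc_Pd : Continuous (fun z : ℝ × ℝ => Pd z.1 z.2) := by
    rw [hPddef]; exact (hc_p.inner hc_v1).add (hc_v1.inner hc_p)
  have hc_cd : Continuous (fun z : ℝ × ℝ => cd z.1 z.2) := by
    rw [hcddef]; exact (hc_v1.cross3' hc_q).add (hc_p.cross3' hc_v2)
  have hc_Cd : Continuous (fun z : ℝ × ℝ => Cd z.1 z.2) := by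
    rw [hCddef]; exact (hc_c.inner hc_cd).add (hc_cd.inner hc_c)
  set K : Set (ℝ × ℝ) := Icc (-ε) ε ×ˢ Icc 0 L with hKdef
  have hKmem : ∀ z : ℝ × ℝ, z ∈ K → |z.1| ≤ ε ∧ z.2 ∈ Icc (0:ℝ) L := fun z hz =>
    ⟨abs_le.mpr ⟨hz.1.1, hz.1.2⟩, hz.2⟩
  have hc_G : ContinuousOn (fun z : ℝ × ℝ => G z.1 z.2) K := by
    rw [hGdef]
    exact (hc_C.continuousOn.div ((hc_P.pow 2).continuousOn)
        (fun z hz => pow_ne_zero 2 (hPpos z.1 (hKmem z hz).1 z.2 (hKmem z hz).2).ne')).add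
      ((continuous_const.mul hc_P).continuousOn)
  have hc_F : ContinuousOn (fun z : ℝ × ℝ => F z.1 z.2) K := by
    rw [hFdef]; exact hc_G.sqrt
  have hc_Fd : ContinuousOn (fun z : ℝ × ℝ => Fd z.1 z.2) K := by
    rw [hFddef]
    refine ContinuousOn.div ?_ ?_ ?_
    · refine ContinuousOn.add ?_ ((continuous_const.mul hc_Pd).continuousOn)
      refine ContinuousOn.div ?_ ?_ ?_
      · exact ((hc_Cd.mul (hc_P.pow 2)).sub
          (hc_C.mul ((continuous_const.mul hc_P).mul hc_Pd))).continuousOn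
      · exact ((hc_P.pow 2).pow 2).continuousOn
      · exact fun z hz => pow_ne_zero 2 (pow_ne_zero 2
          (hPpos z.1 (hKmem z hz).1 z.2 (hKmem z hz).2).ne')
    · exact continuousOn_const.mul hc_G.sqrt
    · exact fun z hz => mul_ne_zero two_ne_zero
        (Real.sqrt_ne_zero'.mpr (hGpos z.1 (hKmem z hz).1 z.2 (hKmem z hz).2))
  have hKcomp : IsCompact K := by rw [hKdef]; exact (isCompact_Icc.prod isCompact_Icc)
  obtain ⟨Mb, hMb⟩ := hKcomp.exists_bound_of_continuousOn hc_Fd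
  have hmemK : ∀ y : ℝ, |y| ≤ ε → ∀ t ∈ Icc (0:ℝ) L, (y, t) ∈ K := by
    intro y hy t ht
    rw [hKdef]
    exact ⟨⟨(abs_le.mp hy).1, (abs_le.mp hy).2⟩, ht⟩
  have hIoc : Ι (0:ℝ) L = Ioc 0 L := uIoc_of_le hL.le
  -- one variable continuity
  have hpair : ∀ y : ℝ, ContinuousOn (fun t : ℝ => ((y, t) : ℝ × ℝ)) (Icc (0:ℝ) L) :=
    fun y => Continuous.continuousOn (continuous_const.prodMk continuous_id)
  have hFcont : ∀ y : ℝ, |y| ≤ ε → ContinuousOn (F y) (Icc (0:ℝ) L) := by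
    intro y hy
    exact ContinuousOn.comp (g := fun z : ℝ × ℝ => F z.1 z.2)
      (f := fun t : ℝ => ((y, t) : ℝ × ℝ)) hc_F (hpair y) (fun t ht => hmemK y hy t ht)
  have hFdcont : ∀ y : ℝ, |y| ≤ ε → ContinuousOn (Fd y) (Icc (0:ℝ) L) := by
    intro y hy
    exact ContinuousOn.comp (g := fun z : ℝ × ℝ => Fd z.1 z.2)
      (f := fun t : ℝ => ((y, t) : ℝ × ℝ)) hc_Fd (hpair y) (fun t ht => hmemK y hy t ht)
  have habs0 : |(0:ℝ)| ≤ ε := by simpa using hε.le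
  -- hypotheses of the dominated convergence theorem
  have hFmeas : ∀ᶠ y in nhds (0:ℝ), AEStronglyMeasurable (F y)
      (MeasureTheory.volume.restrict (Ι (0:ℝ) L)) := by
    filter_upwards [Metric.ball_mem_nhds (0:ℝ) hε] with y hy
    have hy' : |y| ≤ ε := le_of_lt (by simpa [Real.dist_eq] using hy)
    rw [hIoc]
    exact ((hFcont y hy').mono Ioc_subset_Icc_self).aestronglyMeasurable measurableSet_Ioc
  have hFint : IntervalIntegrable (F 0) MeasureTheory.volume 0 L := by
    apply ContinuousOn.intervalIntegrable
    rw [uIcc_of_le hL.le]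
    exact hFcont 0 habs0
  have hFdmeas : AEStronglyMeasurable (Fd 0)
      (MeasureTheory.volume.restrict (Ι (0:ℝ) L)) := by
    rw [hIoc]
    exact ((hFdcont 0 habs0).mono Ioc_subset_Icc_self).aestronglyMeasurable measurableSet_Ioc
  have hbound : ∀ᵐ t ∂(MeasureTheory.volume : MeasureTheory.Measure ℝ), t ∈ Ι (0:ℝ) L →
      ∀ y ∈ Metric.ball (0:ℝ) ε, ‖Fd y t‖ ≤ Mb := by
    refine MeasureTheory.ae_of_all _ ?_
    intro t ht y hy
    have hy' : |y| ≤ ε := le_of_lt (by simpa [Real.dist_eq] using hy)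
    have ht' : t ∈ Icc (0:ℝ) L := Ioc_subset_Icc_self (by rwa [hIoc] at ht)
    exact hMb (y, t) (hmemK y hy' t ht')
  have hbint : IntervalIntegrable (fun _ : ℝ => Mb) MeasureTheory.volume 0 L :=
    intervalIntegrable_const
  have hdiff' : ∀ᵐ t ∂(MeasureTheory.volume : MeasureTheory.Measure ℝ), t ∈ Ι (0:ℝ) L →
      ∀ y ∈ Metric.ball (0:ℝ) ε, HasDerivAt (fun y => F y t) (Fd y t) y := by
    refine MeasureTheory.ae_of_all _ ?_
    intro t ht y hy
    have hy' : |y| ≤ ε := le_of_lt (by simpa [Real.dist_eq] using hy)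
    have ht' : t ∈ Icc (0:ℝ) L := Ioc_subset_Icc_self (by rwa [hIoc] at ht)
    exact hdiff t ht' y hy'
  have hmain := intervalIntegral.hasDerivAt_integral_of_dominated_loc_of_deriv_le (Metric.ball_mem_nhds (0:ℝ) hε) hFmeas
    hFint hFdmeas hbound hbint hdiff'
  -- identification of the map h ↦ E(x + hδN)
  have hfun : (fun h : ℝ => elasticaEnergy β L (fun s => x s + (h * δ s) • N s))
      = fun h : ℝ => ∫ t in (0:ℝ)..L, F h t := by
    funext h
    have hy : (fun s => x s + (h * δ s) • N s) = fun s => x s + h • v s := by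
      funext s; rw [hvdef]; rw [mul_smul]
    rw [hy, elasticaEnergy]
    refine intervalIntegral.integral_congr ?_
    intro t _
    dsimp only
    have hd1 : ∀ u : ℝ, HasDerivAt (fun s => x s + h • v s) (p h u) u := fun u =>
      (hxd u).hasDerivAt.add ((hvd u).hasDerivAt.const_smul h)
    have hD1 : deriv (fun s => x s + h • v s) = fun u => p h u := funext fun u => (hd1 u).deriv
    have hD2 : deriv (deriv (fun s => x s + h • v s)) t = q h t := by
      rw [hD1]
      exact ((hx1d t).hasDerivAt.add ((hv1d t).hasDerivAt.const_smul h)).deriv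
    rw [hD2, hD1]
    simp only [hFdef, hGdef, hCdef, hPdef, hcdef]
    congr 1
    rw [real_inner_self_eq_norm_sq, real_inner_self_eq_norm_sq]
    ring
  have hval : (∫ t in (0:ℝ)..L, Fd 0 t)
      = ∫ s in (0:ℝ)..L, δ s * (deriv (deriv w) s - w s * (τ s ^ 2 + β ^ 2)) := by
    have huIcc : uIcc (0:ℝ) L = Icc 0 L := uIcc_of_le hL.le
    -- pointwise value of the derivative at h = 0
    have ptwise : ∀ t ∈ Icc (0:ℝ) L,
        Fd 0 t = w t * δ2 t - (w t * δ t) * (τ t ^ 2 + β ^ 2) := by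
      intro t ht
      have htV : t ∈ V := hLV ht
      have htU : t ∈ U := hUL ht
      have hp0 : p 0 t = x1 t := by simp only [hpdef, zero_smul, add_zero]
      have hq0 : q 0 t = x2 t := by simp only [hqdef, zero_smul, add_zero]
      have hP0 : P 0 t = 1 := by
        simp only [hPdef, hp0]; exact hx1x1 t htU
      have hcf0 : cf 0 t = cross3 (x1 t) (x2 t) := by simp only [hcdef, hp0, hq0]
      have hC0 : C 0 t = κ t ^ 2 := by
        simp only [hCdef, hcf0]
        rw [cross3_lagrange, hx1x1 t htU, hx2x2 t, hx1x2 t htV]; ring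
      have hPd0 : Pd 0 t = -(2 * (κ t * δ t)) := by
        simp only [hPddef, hp0]
        rw [real_inner_comm (x1 t) (v1 t), hx1v1 t htV]; ring
      have hcd0 : cd 0 t = cross3 (v1 t) (x2 t) + cross3 (x1 t) (v2 t) := by
        simp only [hcddef, hp0, hq0]
      have e1 : (⟪cross3 (x1 t) (x2 t), cross3 (v1 t) (x2 t)⟫ : ℝ)
          = -(κ t * δ t * κ t ^ 2) := by
        rw [cross3_lagrange, hx1v1 t htV, hx2x2 t, hx1x2 t htV]; ring
      have e2 : (⟪cross3 (x1 t) (x2 t), cross3 (x1 t) (v2 t)⟫ : ℝ)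
          = κ t * (δ2 t - δ t * (κ t ^ 2 + τ t ^ 2)) := by
        rw [cross3_lagrange, hx1x1 t htU, hx2v2 t htV, real_inner_comm (x1 t) (x2 t),
          hx1x2 t htV]
        ring
      have hCd0 : Cd 0 t
          = 2 * (-(κ t * δ t * κ t ^ 2) + κ t * (δ2 t - δ t * (κ t ^ 2 + τ t ^ 2))) := by
        simp only [hCddef, hcf0, hcd0, inner_add_right, inner_add_left]
        rw [real_inner_comm (cross3 (x1 t) (x2 t)) (cross3 (v1 t) (x2 t)),
          real_inner_comm (cross3 (x1 t) (x2 t)) (cross3 (x1 t) (v2 t)), e1, e2]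
        ring
      have hG0 : G 0 t = κ t ^ 2 + β ^ 2 := by
        simp only [hGdef]; rw [hC0, hP0]; norm_num
      have hS : Real.sqrt (κ t ^ 2 + β ^ 2) ≠ 0 := (Real.sqrt_pos.mpr (hκβpos t)).ne'
      simp only [hFddef]
      rw [hC0, hP0, hPd0, hCd0, hG0, hw t]
      field_simp
      ring
    -- continuity facts on [0, L]
    have hwc : ContinuousOn w (Icc (0:ℝ) L) := hwsm.continuousOn.mono hLV
    have hw1c : ContinuousOn (deriv w) (Icc (0:ℝ) L) := hw1sm.continuousOn.mono hLV
    have hw2c : ContinuousOn (deriv (deriv w)) (Icc (0:ℝ) L) := hw2sm.continuousOn.mono hLV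
    have hτc : ContinuousOn τ (Icc (0:ℝ) L) := hτcont.mono hLV
    have ii1 : IntervalIntegrable (fun s => w s * δ2 s) MeasureTheory.volume 0 L := by
      apply ContinuousOn.intervalIntegrable; rw [huIcc]
      exact hwc.mul hδ2sm.continuous.continuousOn
    have ii2 : IntervalIntegrable (fun s => (w s * δ s) * (τ s ^ 2 + β ^ 2))
        MeasureTheory.volume 0 L := by
      apply ContinuousOn.intervalIntegrable; rw [huIcc]
      exact ((hwc.mul hδ.continuous.continuousOn).mul ((hτc.pow 2).add continuousOn_const))
    have ii3 : IntervalIntegrable (fun s => deriv (deriv w) s * δ s)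
        MeasureTheory.volume 0 L := by
      apply ContinuousOn.intervalIntegrable; rw [huIcc]
      exact hw2c.mul hδ.continuous.continuousOn
    have iiw1 : IntervalIntegrable (deriv w) MeasureTheory.volume 0 L := by
      apply ContinuousOn.intervalIntegrable; rw [huIcc]; exact hw1c
    have iiw2 : IntervalIntegrable (deriv (deriv w)) MeasureTheory.volume 0 L := by
      apply ContinuousOn.intervalIntegrable; rw [huIcc]; exact hw2c
    have iiδ1 : IntervalIntegrable δ1 MeasureTheory.volume 0 L :=
      hδ1sm.continuous.intervalIntegrable 0 L
    have iiδ2 : IntervalIntegrable δ2 MeasureTheory.volume 0 L :=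
      hδ2sm.continuous.intervalIntegrable 0 L
    -- boundary values vanish
    have h0nots : (0:ℝ) ∉ tsupport δ := fun hc => lt_irrefl 0 (hδsupp hc).1
    have hLnots : L ∉ tsupport δ := fun hc => lt_irrefl L (hδsupp hc).2
    have hδ0 : δ 0 = 0 := image_eq_zero_of_notMem_tsupport h0nots
    have hδL : δ L = 0 := image_eq_zero_of_notMem_tsupport hLnots
    have hδ10 : δ1 0 = 0 := by
      by_contra hne
      exact h0nots (support_deriv_subset (Function.mem_support.mpr hne))
    have hδ1L : δ1 L = 0 := by
      by_contra hne
      exact hLnots (support_deriv_subset (Function.mem_support.mpr hne))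
    -- integration by parts, twice
    have hwd : ∀ s ∈ uIcc (0:ℝ) L, HasDerivAt w (deriv w s) s := fun s hs =>
      (hwdiff s (hLV (huIcc ▸ hs))).hasDerivAt
    have hw1d : ∀ s ∈ uIcc (0:ℝ) L, HasDerivAt (deriv w) (deriv (deriv w) s) s := fun s hs =>
      (hw1diff s (hLV (huIcc ▸ hs))).hasDerivAt
    have hδ1dAt : ∀ s ∈ uIcc (0:ℝ) L, HasDerivAt δ1 (δ2 s) s := fun s _ =>
      (hδ1d s).hasDerivAt
    have hδdAt : ∀ s ∈ uIcc (0:ℝ) L, HasDerivAt δ (δ1 s) s := fun s _ =>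
      (hδd s).hasDerivAt
    have parts1 : (∫ s in (0:ℝ)..L, w s * δ2 s)
        = w L * δ1 L - w 0 * δ1 0 - ∫ s in (0:ℝ)..L, deriv w s * δ1 s :=
      intervalIntegral.integral_mul_deriv_eq_deriv_mul hwd hδ1dAt iiw1 iiδ2
    have parts2 : (∫ s in (0:ℝ)..L, deriv w s * δ1 s)
        = deriv w L * δ L - deriv w 0 * δ 0 - ∫ s in (0:ℝ)..L, deriv (deriv w) s * δ s :=
      intervalIntegral.integral_mul_deriv_eq_deriv_mul hw1d hδdAt iiw2 iiδ1
    -- assemble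
    calc (∫ t in (0:ℝ)..L, Fd 0 t)
        = ∫ t in (0:ℝ)..L, (w t * δ2 t - (w t * δ t) * (τ t ^ 2 + β ^ 2)) := by
          refine intervalIntegral.integral_congr ?_
          intro t ht
          exact ptwise t (huIcc ▸ ht)
      _ = (∫ t in (0:ℝ)..L, w t * δ2 t)
          - ∫ t in (0:ℝ)..L, (w t * δ t) * (τ t ^ 2 + β ^ 2) :=
          intervalIntegral.integral_sub ii1 ii2
      _ = (∫ t in (0:ℝ)..L, deriv (deriv w) t * δ t)
          - ∫ t in (0:ℝ)..L, (w t * δ t) * (τ t ^ 2 + β ^ 2) := by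
          rw [parts1, parts2, hδ0, hδL, hδ10, hδ1L]; ring
      _ = ∫ t in (0:ℝ)..L,
            (deriv (deriv w) t * δ t - (w t * δ t) * (τ t ^ 2 + β ^ 2)) :=
          (intervalIntegral.integral_sub ii3 ii2).symm
      _ = ∫ s in (0:ℝ)..L, δ s * (deriv (deriv w) s - w s * (τ s ^ 2 + β ^ 2)) := by
          refine intervalIntegral.integral_congr ?_
          intro t ht
          ring
  rw [hfun, ← hval]
  exact hmain.2
end

section
/- Let w : ℝ → ℝ² be a normalized-curvature trajectory (i.e., twice continuously differentiable with w''(s) = β² w(s) for all s). Then at every s ∈ ℝ with w(s) ≠ 0, the function σ ↦ ‖w(σ)‖ is twice differentiable at s and its second derivative there equals ( ‖w'(s)‖² ‖w(s)‖² − (w(s)·w'(s))² + β² ‖w(s)‖⁴ ) / ‖w(s)‖³, which is ≥ β² ‖w(s)‖ > 0. In particular, ‖w‖ is strictly convex on any interval where w does not vanish. -/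
/-!
Away from zeros of `w`, `‖w‖' = ⟪w, w'⟫ / ‖w‖`; differentiating once more and using `w'' = β² w`
gives `‖w‖'' = (G + β² ‖w‖⁴) / ‖w‖³` with `G = ‖w'‖² ‖w‖² - ⟪w, w'⟫²`. Cauchy–Schwarz gives
`G ≥ 0`, hence `‖w‖'' ≥ β² ‖w‖ > 0`, and a positive second derivative forces strict convexity.
-/

open RealInnerProductSpace

variable {F : Type*} [NormedAddCommGroup F] [InnerProductSpace ℝ F]

theorem HasDerivAt.norm {f : ℝ → F} {f' : F} {x : ℝ} (hf : HasDerivAt f f' x) (hx : f x ≠ 0) :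
    HasDerivAt (‖f ·‖) (⟪f x, f'⟫ / ‖f x‖) x := by
  have hsqrt := hf.norm_sq.sqrt (pow_ne_zero 2 (norm_ne_zero_iff.mpr hx))
  simp only [Real.sqrt_sq (norm_nonneg _)] at hsqrt
  convert hsqrt using 1
  ring

theorem hasDerivAt_deriv_norm {w : ℝ → F} {w'' : F} {s : ℝ} (hw : Differentiable ℝ w)
    (hw'' : HasDerivAt (deriv w) w'' s) (hs : w s ≠ 0) :
    HasDerivAt (deriv (‖w ·‖))
      ((‖deriv w s‖ ^ 2 * ‖w s‖ ^ 2 - ⟪w s, deriv w s⟫ ^ 2 + ⟪w s, w''⟫ * ‖w s‖ ^ 2)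
        / ‖w s‖ ^ 3) s := by
  have hderiv : deriv (‖w ·‖) =ᶠ[nhds s] fun σ => ⟪w σ, deriv w σ⟫ / ‖w σ‖ := by
    filter_upwards [hw.continuous.continuousAt.eventually_ne hs] with σ hσ
    exact ((hw σ).hasDerivAt.norm hσ).deriv
  have hinner : HasDerivAt (fun σ => ⟪w σ, deriv w σ⟫) (⟪w s, w''⟫ + ‖deriv w s‖ ^ 2) s := by
    simpa only [real_inner_self_eq_norm_sq] using (hw s).hasDerivAt.inner ℝ hw''
  have hquot := hinner.div ((hw s).hasDerivAt.norm hs) (norm_ne_zero_iff.mpr hs)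
  refine (hquot.congr_deriv ?_).congr_of_eventuallyEq hderiv
  have := norm_ne_zero_iff.mpr hs
  field_simp
  ring

theorem real_inner_sq_le_norm_sq_mul_norm_sq (x y : F) : ⟪x, y⟫ ^ 2 ≤ ‖x‖ ^ 2 * ‖y‖ ^ 2 := by
  simpa only [sq, real_inner_self_eq_norm_mul_norm, mul_mul_mul_comm]
    using real_inner_mul_inner_self_le x y

theorem mul_norm_le_gram_add_mul_div (x y : F) (hx : x ≠ 0) (c : ℝ) :
    c * ‖x‖ ≤ (‖y‖ ^ 2 * ‖x‖ ^ 2 - ⟪x, y⟫ ^ 2 + c * ‖x‖ ^ 4) / ‖x‖ ^ 3 := by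
  have hpos : 0 < ‖x‖ := norm_pos_iff.mpr hx
  rw [le_div_iff₀ (by positivity)]
  linarith [real_inner_sq_le_norm_sq_mul_norm_sq x y]

theorem hasDerivAt_deriv_norm_of_hasDerivAt_deriv_eq_smul {w : ℝ → F} {c s : ℝ}
    (hw : Differentiable ℝ w) (hw'' : HasDerivAt (deriv w) (c • w s) s) (hs : w s ≠ 0) :
    HasDerivAt (deriv (‖w ·‖))
      ((‖deriv w s‖ ^ 2 * ‖w s‖ ^ 2 - ⟪w s, deriv w s⟫ ^ 2 + c * ‖w s‖ ^ 4) / ‖w s‖ ^ 3) s := by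
  simpa only [real_inner_smul_right, real_inner_self_eq_norm_sq, mul_assoc, ← pow_add]
    using hasDerivAt_deriv_norm hw hw'' hs

/-- Along a normalized-curvature trajectory `w` (a C² curve in ℝ² with
`w'' = β² w`), at every point where `w(s) ≠ 0` the function `σ ↦ ‖w(σ)‖` is twice
differentiable with second derivative
`(‖w'‖²‖w‖² − (w·w')² + β²‖w‖⁴)/‖w‖³ ≥ β²‖w‖ > 0`; in particular `‖w‖` is strictly
convex on any interval where `w` does not vanish. -/
theorem stmt_6 (β : ℝ) (hβ : 0 < β)
    (w : ℝ → EuclideanSpace ℝ (Fin 2)) (hw : ContDiff ℝ 2 w)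
    (hODE : ∀ s : ℝ, deriv (deriv w) s = β ^ 2 • w s) :
    (∀ s : ℝ, w s ≠ 0 →
      DifferentiableAt ℝ (fun σ => ‖w σ‖) s ∧
      HasDerivAt (deriv fun σ => ‖w σ‖)
        ((‖deriv w s‖ ^ 2 * ‖w s‖ ^ 2 - (inner ℝ (w s) (deriv w s) : ℝ) ^ 2
            + β ^ 2 * ‖w s‖ ^ 4) / ‖w s‖ ^ 3) s ∧
      β ^ 2 * ‖w s‖ ≤ (‖deriv w s‖ ^ 2 * ‖w s‖ ^ 2 - (inner ℝ (w s) (deriv w s) : ℝ) ^ 2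
            + β ^ 2 * ‖w s‖ ^ 4) / ‖w s‖ ^ 3 ∧
      0 < β ^ 2 * ‖w s‖) ∧
    ∀ a b : ℝ, a < b → (∀ σ ∈ Set.Icc a b, w σ ≠ 0) →
      StrictConvexOn ℝ (Set.Icc a b) (fun σ => ‖w σ‖) := by
  have hw' : Differentiable ℝ w := hw.differentiable two_ne_zero
  have hw'' (s : ℝ) : HasDerivAt (deriv w) (β ^ 2 • w s) s :=
    hODE s ▸ ((contDiff_succ_iff_deriv.mp hw).2.2.differentiable one_ne_zero s).hasDerivAt
  have hsecond (s : ℝ) (hs : w s ≠ 0) :=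
    hasDerivAt_deriv_norm_of_hasDerivAt_deriv_eq_smul hw' (hw'' s) hs
  have hpos (s : ℝ) (hs : w s ≠ 0) : 0 < β ^ 2 * ‖w s‖ := by
    have := norm_pos_iff.mpr hs; positivity
  refine ⟨fun s hs => ⟨((hw' s).hasDerivAt.norm hs).differentiableAt, hsecond s hs,
    mul_norm_le_gram_add_mul_div _ _ hs _, hpos s hs⟩, fun a b _ hne => ?_⟩
  refine strictConvexOn_of_deriv2_pos (convex_Icc a b) hw.continuous.norm.continuousOn
    fun x hx => ?_
  rw [interior_Icc] at hx
  have hx' := hne x (Set.Ioo_subset_Icc_self hx)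
  rw [Function.iterate_succ_apply, Function.iterate_one, (hsecond x hx').deriv]
  exact (hpos x hx').trans_le (mul_norm_le_gram_add_mul_div _ _ hx' _)
end

section
/- Let w : ℝ → ℝ² be a normalized-curvature trajectory (i.e., twice continuously differentiable with w''(s) = β² w(s) for all s). Assume w(0)·w'(0) ≤ 0, β w(0) + w'(0) ≠ 0, and (w(0), w'(0)) ≠ (0,0). Set s_min := (1/(2β)) ln( ‖β w(0) − w'(0)‖ / ‖β w(0) + w'(0)‖ ). Then s_min ≥ 0, ‖w(s_min)‖² = (1/2)( √((1−𝔠²)² + 4β⁻²W²) + 1 − 𝔠² ), ‖w'(s_min)‖² = (β²/2)( √((1−𝔠²)² + 4β⁻²W²) − (1 − 𝔠²) ), and ‖w(s)‖ ≥ ‖w(s_min)‖ and ‖w'(s)‖ ≥ ‖w'(s_min)‖ for all s ∈ ℝ. -/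
/-!
With `a = βw(0) + w'(0)` and `b = βw(0) − w'(0)`, the equation `w'' = β²w` forces
`2β w(s) = e^{βs} a + e^{−βs} b` and `2 w'(s) = e^{βs} a − e^{−βs} b`. Expanding the squared
norms, both are `e^{2βs}‖a‖² ± 2⟪a, b⟫ + e^{−2βs}‖b‖²` up to a constant factor, and by AM–GM this
is smallest, with value `2(‖a‖‖b‖ ± ⟪a, b⟫)`, exactly when `e^{2βs} = ‖b‖/‖a‖`, that is at
`s = s_min`. The sign condition `w(0)·w'(0) ≤ 0` is `‖a‖ ≤ ‖b‖`, i.e. `s_min ≥ 0`. Finally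
`⟪a, b⟫ = β²(1 − 𝔠²)`, and Lagrange's identity in the plane gives
`‖a‖²‖b‖² = ⟪a, b⟫² + 4β²W²`, which turns the minimal values into the stated formulas.
-/

open Real

section InnerProduct

variable {E : Type*} [NormedAddCommGroup E] [InnerProductSpace ℝ E]

theorem norm_exp_smul_add_exp_neg_smul_sq (x y : E) (r : ℝ) :
    ‖exp r • x + exp (-r) • y‖ ^ 2 =
      exp r ^ 2 * ‖x‖ ^ 2 + 2 * inner ℝ x y + exp (-r) ^ 2 * ‖y‖ ^ 2 := by
  have hexp : exp r * exp (-r) = 1 := by rw [← exp_add, add_neg_cancel, exp_zero]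
  rw [norm_add_sq_real, norm_smul, norm_smul, real_inner_smul_left, real_inner_smul_right,
    mul_pow, mul_pow, norm_of_nonneg (exp_pos r).le, norm_of_nonneg (exp_pos (-r)).le]
  linear_combination 2 * inner ℝ x y * hexp

theorem two_mul_add_inner_le_norm_exp_smul_add_exp_neg_smul_sq (x y : E) (r : ℝ) :
    2 * (‖x‖ * ‖y‖ + inner ℝ x y) ≤ ‖exp r • x + exp (-r) • y‖ ^ 2 := by
  have hexp : exp r * exp (-r) = 1 := by rw [← exp_add, add_neg_cancel, exp_zero]
  have hsq : (exp r * ‖x‖ - exp (-r) * ‖y‖) ^ 2 =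
      exp r ^ 2 * ‖x‖ ^ 2 + exp (-r) ^ 2 * ‖y‖ ^ 2 - 2 * (‖x‖ * ‖y‖) := by
    linear_combination (-2 * ‖x‖ * ‖y‖) * hexp
  rw [norm_exp_smul_add_exp_neg_smul_sq]
  linarith [sq_nonneg (exp r * ‖x‖ - exp (-r) * ‖y‖)]

theorem norm_exp_smul_add_exp_neg_smul_sq_of_log {x y : E} (hx : x ≠ 0) (hy : y ≠ 0) :
    ‖exp (log (‖y‖ / ‖x‖) / 2) • x + exp (-(log (‖y‖ / ‖x‖) / 2)) • y‖ ^ 2 =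
      2 * (‖x‖ * ‖y‖ + inner ℝ x y) := by
  have hx' := norm_pos_iff.2 hx
  have hy' := norm_pos_iff.2 hy
  have hsq : ∀ t : ℝ, exp (t / 2) ^ 2 = exp t := fun t => by
    rw [← exp_nat_mul]; congr 1; push_cast; ring
  rw [norm_exp_smul_add_exp_neg_smul_sq, ← neg_div, hsq, hsq, exp_neg, exp_log (by positivity)]
  field_simp
  ring

theorem norm_exp_smul_add_exp_neg_smul_of_log_le {x y : E} (hx : x ≠ 0) (hy : y ≠ 0) (r : ℝ) :
    ‖exp (log (‖y‖ / ‖x‖) / 2) • x + exp (-(log (‖y‖ / ‖x‖) / 2)) • y‖ ≤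
      ‖exp r • x + exp (-r) • y‖ := by
  refine le_of_sq_le_sq ?_ (norm_nonneg _)
  rw [norm_exp_smul_add_exp_neg_smul_sq_of_log hx hy]
  exact two_mul_add_inner_le_norm_exp_smul_add_exp_neg_smul_sq x y r

theorem inner_smul_add_smul_sub (β : ℝ) (u v : E) :
    inner ℝ (β • u + v) (β • u - v) = β ^ 2 * ‖u‖ ^ 2 - ‖v‖ ^ 2 := by
  simp only [inner_add_left, inner_sub_right, real_inner_smul_left, real_inner_smul_right,
    real_inner_self_eq_norm_sq, real_inner_comm u v]
  rw [norm_smul, mul_pow, norm_eq_abs, sq_abs]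
  ring

theorem norm_smul_add_le_norm_smul_sub {β : ℝ} (hβ : 0 ≤ β) {u v : E} (huv : inner ℝ u v ≤ 0) :
    ‖β • u + v‖ ≤ ‖β • u - v‖ := by
  refine le_of_sq_le_sq ?_ (norm_nonneg _)
  rw [norm_add_sq_real, norm_sub_sq_real, real_inner_smul_left]
  nlinarith

end InnerProduct

section Trajectory

variable {E : Type*} [NormedAddCommGroup E] [NormedSpace ℝ E] {w : ℝ → E} {μ : ℝ}

/-- `e^{-μs} (μ w + w')` has derivative `e^{-μs} (μ² w − μ² w) = 0`. -/
theorem smul_add_deriv_eq_exp_smul (hw : Differentiable ℝ w) (hw' : Differentiable ℝ (deriv w))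
    (hODE : ∀ s, deriv (deriv w) s = μ ^ 2 • w s) (s : ℝ) :
    μ • w s + deriv w s = exp (μ * s) • (μ • w 0 + deriv w 0) := by
  set g : ℝ → E := fun s => exp (-μ * s) • (μ • w s + deriv w s)
  have hg : ∀ s, HasDerivAt g 0 s := fun s => by
    have hexp : HasDerivAt (fun s => exp (-μ * s)) (exp (-μ * s) * -μ) s := by
      simpa only [mul_one] using ((hasDerivAt_id' s).const_mul (-μ)).exp
    have hw'' : HasDerivAt (deriv w) (μ ^ 2 • w s) s := hODE s ▸ (hw' s).hasDerivAt
    refine (hexp.smul (((hw s).hasDerivAt.const_smul μ).add hw'')).congr_deriv ?_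
    simp only [Pi.add_apply, Pi.smul_apply, neg_mul]
    match_scalars <;> ring
  have hconst : g s = g 0 :=
    is_const_of_deriv_eq_zero (fun x => (hg x).differentiableAt) (fun x => (hg x).deriv) s 0
  simp only [g, mul_zero, exp_zero, one_smul] at hconst
  rw [← hconst, smul_smul, ← exp_add, neg_mul, add_neg_cancel, exp_zero, one_smul]

theorem eq_smul_exp_smul_add_exp_neg_smul (hμ : μ ≠ 0) (hw : Differentiable ℝ w)
    (hw' : Differentiable ℝ (deriv w)) (hODE : ∀ s, deriv (deriv w) s = μ ^ 2 • w s) (s : ℝ) :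
    w s = (2 * μ)⁻¹ •
        (exp (μ * s) • (μ • w 0 + deriv w 0) + exp (-(μ * s)) • (μ • w 0 - deriv w 0)) ∧
      deriv w s = (2 : ℝ)⁻¹ •
        (exp (μ * s) • (μ • w 0 + deriv w 0) + exp (-(μ * s)) • -(μ • w 0 - deriv w 0)) := by
  have hplus := smul_add_deriv_eq_exp_smul hw hw' hODE s
  have hminus := smul_add_deriv_eq_exp_smul (μ := -μ) hw hw' (by simpa using hODE) s
  rw [neg_mul] at hminus
  have hb : -(μ • w 0 - deriv w 0) = -μ • w 0 + deriv w 0 := by module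
  constructor
  · rw [eq_inv_smul_iff₀ (mul_ne_zero two_ne_zero hμ), ← neg_neg (μ • w 0 - deriv w 0), hb,
      smul_neg, ← hplus, ← hminus]
    module
  · rw [eq_inv_smul_iff₀ two_ne_zero, hb, ← hplus, ← hminus]
    module

end Trajectory

theorem EuclideanSpace.norm_sq_mul_norm_sq_eq_inner_sq_add_sq (a b : EuclideanSpace ℝ (Fin 2)) :
    ‖a‖ ^ 2 * ‖b‖ ^ 2 = inner ℝ a b ^ 2 + (a 0 * b 1 - a 1 * b 0) ^ 2 := by
  simp only [EuclideanSpace.real_norm_sq_eq, PiLp.inner_apply, RCLike.inner_apply, conj_trivial,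
    Fin.sum_univ_two]
  ring

theorem EuclideanSpace.norm_smul_add_mul_norm_smul_sub {β : ℝ} (hβ : β ≠ 0)
    (u v : EuclideanSpace ℝ (Fin 2)) :
    ‖β • u + v‖ * ‖β • u - v‖ = β ^ 2 *
      √((‖u‖ ^ 2 - β⁻¹ ^ 2 * ‖v‖ ^ 2) ^ 2 + 4 * β⁻¹ ^ 2 * (u 0 * v 1 - u 1 * v 0) ^ 2) := by
  have hcross : (β • u + v) 0 * (β • u - v) 1 - (β • u + v) 1 * (β • u - v) 0 =
      -(2 * β) * (u 0 * v 1 - u 1 * v 0) := by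
    simp only [PiLp.add_apply, PiLp.sub_apply, PiLp.smul_apply, smul_eq_mul]
    ring
  have hsq : (‖β • u + v‖ * ‖β • u - v‖) ^ 2 = (β ^ 2) ^ 2 *
      ((‖u‖ ^ 2 - β⁻¹ ^ 2 * ‖v‖ ^ 2) ^ 2 + 4 * β⁻¹ ^ 2 * (u 0 * v 1 - u 1 * v 0) ^ 2) := by
    rw [mul_pow, norm_sq_mul_norm_sq_eq_inner_sq_add_sq, inner_smul_add_smul_sub, hcross]
    field_simp
    ring
  rw [← sqrt_sq (by positivity : 0 ≤ ‖β • u + v‖ * ‖β • u - v‖), hsq,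
    sqrt_mul (by positivity), sqrt_sq (by positivity)]

theorem stmt_7_general (β : ℝ) (hβ : 0 < β)
    (w : ℝ → EuclideanSpace ℝ (Fin 2)) (hw : ContDiff ℝ 2 w)
    (hODE : ∀ s : ℝ, deriv (deriv w) s = β ^ 2 • w s)
    (W : ℝ) (hW : W = (w 0) 0 * (deriv w 0) 1 - (w 0) 1 * (deriv w 0) 0)
    (c : ℝ)
    (hc : c ^ 2 = 1 - ‖w 0‖ ^ 2 + β⁻¹ ^ 2 * ‖deriv w 0‖ ^ 2)
    (hperp : (inner ℝ (w 0) (deriv w 0) : ℝ) ≤ 0)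
    (hne : β • w 0 + deriv w 0 ≠ 0)
    (smin : ℝ)
    (hsmin : smin = (1 / (2 * β)) * Real.log (‖β • w 0 - deriv w 0‖ / ‖β • w 0 + deriv w 0‖)) :
    0 ≤ smin ∧
    ‖w smin‖ ^ 2 = (1 / 2) * (Real.sqrt ((1 - c ^ 2) ^ 2 + 4 * β⁻¹ ^ 2 * W ^ 2) + 1 - c ^ 2) ∧
    ‖deriv w smin‖ ^ 2 =
      (β ^ 2 / 2) * (Real.sqrt ((1 - c ^ 2) ^ 2 + 4 * β⁻¹ ^ 2 * W ^ 2) - (1 - c ^ 2)) ∧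
    ∀ s : ℝ, ‖w smin‖ ≤ ‖w s‖ ∧ ‖deriv w smin‖ ≤ ‖deriv w s‖ := by
  have hw₁ := hw.differentiable (by norm_num)
  have hclosed := eq_smul_exp_smul_add_exp_neg_smul hβ.ne' hw₁ hw.differentiable_deriv_two hODE
  set a := β • w 0 + deriv w 0
  set b := β • w 0 - deriv w 0
  have hab : ‖a‖ ≤ ‖b‖ := norm_smul_add_le_norm_smul_sub hβ.le hperp
  have hb : b ≠ 0 := norm_pos_iff.1 ((norm_pos_iff.2 hne).trans_le hab)
  have hr : β * smin = log (‖b‖ / ‖a‖) / 2 := by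
    rw [hsmin]; field_simp
  have hD : inner ℝ a b = β ^ 2 * (1 - c ^ 2) := by
    rw [inner_smul_add_smul_sub]
    linear_combination β ^ 2 * hc + ‖deriv w 0‖ ^ 2 * (mul_inv_cancel₀ (pow_ne_zero 2 hβ.ne'))
  have hS : √((1 - c ^ 2) ^ 2 + 4 * β⁻¹ ^ 2 * W ^ 2) = ‖a‖ * ‖b‖ / β ^ 2 := by
    rw [EuclideanSpace.norm_smul_add_mul_norm_smul_sub hβ.ne', hW, hc]
    field_simp
    ring_nf
  refine ⟨?_, ?_, ?_, fun s => ⟨?_, ?_⟩⟩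
  · rw [hsmin]
    exact mul_nonneg (by positivity) (log_nonneg ((one_le_div (norm_pos_iff.2 hne)).2 hab))
  · rw [(hclosed smin).1, norm_smul, mul_pow, norm_eq_abs, sq_abs, hr,
      norm_exp_smul_add_exp_neg_smul_sq_of_log hne hb, hS, hD]
    field_simp
    ring
  · rw [(hclosed smin).2, norm_smul, mul_pow, norm_eq_abs, sq_abs, hr, ← norm_neg b,
      norm_exp_smul_add_exp_neg_smul_sq_of_log hne (neg_ne_zero.2 hb), inner_neg_right, norm_neg,
      hS, hD]
    field_simp
    ring
  · rw [(hclosed smin).1, (hclosed s).1, norm_smul, norm_smul, hr]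
    gcongr
    exact norm_exp_smul_add_exp_neg_smul_of_log_le hne hb _
  · rw [(hclosed smin).2, (hclosed s).2, norm_smul, norm_smul, hr, ← norm_neg b]
    gcongr
    exact norm_exp_smul_add_exp_neg_smul_of_log_le hne (neg_ne_zero.2 hb) _

/-- Along a normalized-curvature trajectory `w` (a C² curve in ℝ² with
`w'' = β² w`) with `w(0)·w'(0) ≤ 0`, `βw(0) + w'(0) ≠ 0` and `(w(0),w'(0)) ≠ (0,0)`,
the point `s_min = (1/(2β)) ln(‖βw(0) − w'(0)‖/‖βw(0) + w'(0)‖)` is nonnegative,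
the values of `‖w‖²` and `‖w'‖²` there are given by explicit formulas in `𝔠` and the
Wronskian `W`, and `‖w‖`, `‖w'‖` attain their global minima at `s_min`. -/
theorem stmt_7 (β : ℝ) (hβ : 0 < β)
    (w : ℝ → EuclideanSpace ℝ (Fin 2)) (hw : ContDiff ℝ 2 w)
    (hODE : ∀ s : ℝ, deriv (deriv w) s = β ^ 2 • w s)
    (W : ℝ) (hW : W = (w 0) 0 * (deriv w 0) 1 - (w 0) 1 * (deriv w 0) 0)
    (c : ℝ) (hc0 : 0 ≤ c)
    (hc : c ^ 2 = 1 - ‖w 0‖ ^ 2 + β⁻¹ ^ 2 * ‖deriv w 0‖ ^ 2)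
    (hperp : (inner ℝ (w 0) (deriv w 0) : ℝ) ≤ 0)
    (hne : β • w 0 + deriv w 0 ≠ 0)
    (hne0 : ¬(w 0 = 0 ∧ deriv w 0 = 0))
    (smin : ℝ)
    (hsmin : smin = (1 / (2 * β)) * Real.log (‖β • w 0 - deriv w 0‖ / ‖β • w 0 + deriv w 0‖)) :
    0 ≤ smin ∧
    ‖w smin‖ ^ 2 = (1 / 2) * (Real.sqrt ((1 - c ^ 2) ^ 2 + 4 * β⁻¹ ^ 2 * W ^ 2) + 1 - c ^ 2) ∧
    ‖deriv w smin‖ ^ 2 =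
      (β ^ 2 / 2) * (Real.sqrt ((1 - c ^ 2) ^ 2 + 4 * β⁻¹ ^ 2 * W ^ 2) - (1 - c ^ 2)) ∧
    ∀ s : ℝ, ‖w smin‖ ≤ ‖w s‖ ∧ ‖deriv w smin‖ ≤ ‖deriv w s‖ :=
  stmt_7_general β hβ w hw hODE W hW c hc hperp hne smin hsmin
end

section
/- Let w : ℝ → ℝ² be a normalized-curvature trajectory (i.e., twice continuously differentiable with w''(s) = β² w(s) for all s) with Wronskian W ≠ 0, and let L > 0 be such that ‖w(s)‖ ≤ 1 for all s ∈ [0,L]. Then w(s) ≠ 0 on [0,L], and the torsion τ(s) := W / ‖w(s)‖² satisfies, for all s ∈ [0,L]: |W| ≤ |τ(s)| ≤ 2|W| / ( √((1−𝔠²)² + 4β⁻²W²) + 1 − 𝔠² ). -/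
/-!
Along `w'' = β² w` both the Wronskian `W = w₁w₂' − w₂w₁'` and `β²‖w‖² − ‖w'‖²` are conserved; the
latter, evaluated at `0`, gives `‖w'‖² = β² (‖w‖² − (1 − 𝔠²))`. Lagrange's identity
`W² ≤ ‖w‖² ‖w'‖²` then says that `x = ‖w(s)‖²` satisfies `x (x − (1 − 𝔠²)) ≥ β⁻² W² > 0`, so `x > 0`
and `x` lies above the larger root `(√((1 − 𝔠²)² + 4β⁻²W²) + 1 − 𝔠²) / 2` of the quadratic.
Together with `x ≤ 1` this bounds `|τ(s)| = |W| / x` on both sides.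
-/

open RealInnerProductSpace

theorem eq_of_forall_hasDerivAt_zero {f : ℝ → ℝ} (hf : ∀ t, HasDerivAt f 0 t) (s t : ℝ) :
    f s = f t :=
  is_const_of_deriv_eq_zero (fun t ↦ (hf t).differentiableAt) (fun t ↦ (hf t).deriv) s t

section SecondOrder

variable {E : Type*} [NormedAddCommGroup E] [InnerProductSpace ℝ E]
  {a : ℝ} {w w' : ℝ → E}

theorem mul_norm_sq_sub_norm_sq_conserved (hw : ∀ t, HasDerivAt w (w' t) t)
    (hw' : ∀ t, HasDerivAt w' (a • w t) t) (s t : ℝ) :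
    a * ‖w s‖ ^ 2 - ‖w' s‖ ^ 2 = a * ‖w t‖ ^ 2 - ‖w' t‖ ^ 2 := by
  refine eq_of_forall_hasDerivAt_zero (f := fun t ↦ a * ‖w t‖ ^ 2 - ‖w' t‖ ^ 2) (fun t ↦ ?_) s t
  refine (((hw t).norm_sq.const_mul a).sub (hw' t).norm_sq).congr_deriv ?_
  rw [inner_smul_right, real_inner_comm]
  ring

end SecondOrder

def wronskian (u v : EuclideanSpace ℝ (Fin 2)) : ℝ := u 0 * v 1 - u 1 * v 0

theorem wronskian_sq_add_inner_sq (u v : EuclideanSpace ℝ (Fin 2)) :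
    wronskian u v ^ 2 + ⟪u, v⟫ ^ 2 = ‖u‖ ^ 2 * ‖v‖ ^ 2 := by
  simp only [wronskian, EuclideanSpace.real_norm_sq_eq, PiLp.inner_apply, Fin.sum_univ_two,
    RCLike.inner_apply, conj_trivial]
  ring

theorem wronskian_sq_le (u v : EuclideanSpace ℝ (Fin 2)) :
    wronskian u v ^ 2 ≤ ‖u‖ ^ 2 * ‖v‖ ^ 2 := by
  rw [← wronskian_sq_add_inner_sq]
  exact le_add_of_nonneg_right (sq_nonneg _)

theorem wronskian_conserved {a : ℝ} {w w' : ℝ → EuclideanSpace ℝ (Fin 2)}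
    (hw : ∀ t, HasDerivAt w (w' t) t) (hw' : ∀ t, HasDerivAt w' (a • w t) t) (s t : ℝ) :
    wronskian (w s) (w' s) = wronskian (w t) (w' t) := by
  refine eq_of_forall_hasDerivAt_zero (f := fun t ↦ wronskian (w t) (w' t)) (fun t ↦ ?_) s t
  have hc i := (EuclideanSpace.proj i).hasFDerivAt.comp_hasDerivAt t (hw t)
  have hc' i := (EuclideanSpace.proj i).hasFDerivAt.comp_hasDerivAt t (hw' t)
  refine (((hc 0).mul (hc' 1)).sub ((hc 1).mul (hc' 0))).congr_deriv ?_
  simp only [Fin.isValue, PiLp.proj_apply, EuclideanSpace.coe_proj, Function.comp_apply,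
    map_smul, smul_eq_mul]
  ring

theorem sqrt_sq_add_four_mul_add_le_two_mul {x k d : ℝ} (hx : 0 ≤ x) (hd : 0 < d)
    (h : d ≤ x * (x - k)) : √(k ^ 2 + 4 * d) + k ≤ 2 * x := by
  have hxk : 0 ≤ 2 * x - k := by nlinarith
  have : √(k ^ 2 + 4 * d) ≤ 2 * x - k := (Real.sqrt_le_left hxk).mpr (by linarith)
  linarith

theorem sqrt_sq_add_add_pos (k : ℝ) {d : ℝ} (hd : 0 < d) : 0 < √(k ^ 2 + d) + k := by
  have : |k| < √(k ^ 2 + d) := by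
    rw [← Real.sqrt_sq_eq_abs]
    exact Real.sqrt_lt_sqrt (sq_nonneg k) (by linarith)
  linarith [neg_abs_le k]

theorem stmt_8_general (β : ℝ) (hβ : 0 < β)
    (w : ℝ → EuclideanSpace ℝ (Fin 2)) (hw : ContDiff ℝ 2 w)
    (hODE : ∀ s : ℝ, deriv (deriv w) s = β ^ 2 • w s)
    (W : ℝ) (hWdef : W = (w 0) 0 * (deriv w 0) 1 - (w 0) 1 * (deriv w 0) 0)
    (hW : W ≠ 0)
    (c : ℝ)
    (hc : c ^ 2 = 1 - ‖w 0‖ ^ 2 + β⁻¹ ^ 2 * ‖deriv w 0‖ ^ 2)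
    (L : ℝ)
    (hw1 : ∀ s ∈ Set.Icc (0 : ℝ) L, ‖w s‖ ≤ 1)
    (τ : ℝ → ℝ) (hτ : ∀ s, τ s = W / ‖w s‖ ^ 2) :
    ∀ s ∈ Set.Icc (0 : ℝ) L,
      w s ≠ 0 ∧
      |W| ≤ |τ s| ∧
      |τ s| ≤ 2 * |W| / (Real.sqrt ((1 - c ^ 2) ^ 2 + 4 * β⁻¹ ^ 2 * W ^ 2) + 1 - c ^ 2) := by
  intro s hs
  have hw' t : HasDerivAt w (deriv w t) t := (hw.differentiable two_ne_zero t).hasDerivAt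
  have hw'' t : HasDerivAt (deriv w) (β ^ 2 • w t) t :=
    hODE t ▸ (hw.differentiable_deriv_two t).hasDerivAt
  set x := ‖w s‖ ^ 2
  have hspeed : ‖deriv w s‖ ^ 2 = β ^ 2 * (x - (1 - c ^ 2)) := by
    have := mul_norm_sq_sub_norm_sq_conserved hw' hw'' s 0
    rw [hc, inv_pow]
    field_simp
    linarith
  have hlagrange : W ^ 2 ≤ x * (β ^ 2 * (x - (1 - c ^ 2))) := by
    rw [← hspeed, show W = wronskian (w 0) (deriv w 0) from hWdef,
      ← wronskian_conserved hw' hw'' s 0]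
    exact wronskian_sq_le _ _
  have hd : 0 < β⁻¹ ^ 2 * W ^ 2 := by positivity
  have hx : 0 < x := by
    refine (show 0 ≤ x by positivity).lt_of_ne fun hx0 ↦ hW ?_
    rw [← hx0, zero_mul] at hlagrange
    exact pow_eq_zero_iff two_ne_zero |>.mp (hlagrange.antisymm (sq_nonneg W))
  have hroot := sqrt_sq_add_four_mul_add_le_two_mul (k := 1 - c ^ 2) hx.le hd (by
    rw [← mul_le_mul_iff_of_pos_left (pow_pos hβ 2)]
    field_simp
    linarith)
  have hτs : |τ s| = |W| / x := by rw [hτ, abs_div, abs_of_pos hx]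
  refine ⟨fun h ↦ by simp [x, h] at hx, ?_, ?_⟩
  · rw [hτs]
    exact le_div_self (abs_nonneg W) hx (pow_le_one₀ (norm_nonneg _) (hw1 s hs))
  · rw [hτs, mul_assoc, add_sub_assoc, ← mul_div_mul_left (|W|) x two_ne_zero]
    exact div_le_div_of_nonneg_left (by positivity) (sqrt_sq_add_add_pos _ (by positivity)) hroot

/-- Along a normalized-curvature trajectory `w` (a C² curve in ℝ² with
`w'' = β² w`) with nonzero Wronskian `W` and with `‖w(s)‖ ≤ 1` on `[0,L]`, one has
`w(s) ≠ 0` on `[0,L]` and the torsion `τ(s) = W/‖w(s)‖²` satisfies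
`|W| ≤ |τ(s)| ≤ 2|W|/(√((1−𝔠²)² + 4β⁻²W²) + 1 − 𝔠²)`. -/
theorem stmt_8 (β : ℝ) (hβ : 0 < β)
    (w : ℝ → EuclideanSpace ℝ (Fin 2)) (hw : ContDiff ℝ 2 w)
    (hODE : ∀ s : ℝ, deriv (deriv w) s = β ^ 2 • w s)
    (W : ℝ) (hWdef : W = (w 0) 0 * (deriv w 0) 1 - (w 0) 1 * (deriv w 0) 0)
    (hW : W ≠ 0)
    (c : ℝ) (hc0 : 0 ≤ c)
    (hc : c ^ 2 = 1 - ‖w 0‖ ^ 2 + β⁻¹ ^ 2 * ‖deriv w 0‖ ^ 2)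
    (L : ℝ) (hL : 0 < L)
    (hw1 : ∀ s ∈ Set.Icc (0 : ℝ) L, ‖w s‖ ≤ 1)
    (τ : ℝ → ℝ) (hτ : ∀ s, τ s = W / ‖w s‖ ^ 2) :
    ∀ s ∈ Set.Icc (0 : ℝ) L,
      w s ≠ 0 ∧
      |W| ≤ |τ s| ∧
      |τ s| ≤ 2 * |W| / (Real.sqrt ((1 - c ^ 2) ^ 2 + 4 * β⁻¹ ^ 2 * W ^ 2) + 1 - c ^ 2) :=
  stmt_8_general β hβ w hw hODE W hWdef hW c hc L hw1 τ hτ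
end

section
/- Let w : ℝ → ℝ² be a normalized-curvature trajectory (i.e., twice continuously differentiable with w''(s) = β² w(s) for all s) with ‖w(0)‖ ≤ 1 and β w(0) + w'(0) ≠ 0. Then 𝔠² ≥ β⁻² W², the number s_max := (1/(2β)) ln( (1 + 𝔠² + 2√(𝔠² − β⁻²W²)) / ‖w(0) + β⁻¹ w'(0)‖² ) satisfies s_max ≥ 0, ‖w(s_max)‖ = 1, ‖w(s)‖ ≤ 1 for all s ∈ [0, s_max], and ‖w(s)‖ > 1 for all s > s_max. -/
/-!
Both `w' + β w` and `w' - β w` solve a scalar linear ODE, hence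
`w s = exp (β s) • P + exp (-β s) • Q` with `P + Q = w 0` and `β (P - Q) = w' 0`.
With `x = exp (2 β s)` this gives
`(‖w s‖² - 1) x = ‖P‖² x² - (1 - 2⟪P, Q⟫) x + ‖Q‖²`, a quadratic in `x` with positive leading
coefficient which is `≤ 0` at `x = 1` because `‖w 0‖ ≤ 1`. So `1` lies between its roots, and
for `x ≥ 1` it is `≤ 0` exactly up to its larger root, which is `exp (2 β s_max)`: indeed
`𝔠² = 1 - 4⟪P, Q⟫` and, by Lagrange's identity in the plane,
`β⁻² W² = 4 (‖P‖² ‖Q‖² - ⟪P, Q⟫²)`, so `𝔠² - β⁻² W²` is the discriminant.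
-/

open Real Set

section Quadratic

variable {p b q S x : ℝ}

theorem four_mul_quadratic_eq (hS : S ^ 2 = b ^ 2 - 4 * p * q) :
    4 * p * (p * x ^ 2 - b * x + q) = (2 * p * x - b - S) * (2 * p * x - b + S) := by
  linear_combination hS

theorem discrim_nonneg_of_quadratic_nonpos (hp : 0 < p) (hx : p * x ^ 2 - b * x + q ≤ 0) :
    0 ≤ b ^ 2 - 4 * p * q := by
  nlinarith [sq_nonneg (2 * p * x - b)]

theorem mem_roots_of_quadratic_nonpos (hp : 0 < p) (hS0 : 0 ≤ S)
    (hS : S ^ 2 = b ^ 2 - 4 * p * q) (hx : p * x ^ 2 - b * x + q ≤ 0) :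
    b - S ≤ 2 * p * x ∧ 2 * p * x ≤ b + S := by
  have hsq : (2 * p * x - b) ^ 2 ≤ S ^ 2 := by nlinarith [four_mul_quadratic_eq (x := x) hS]
  obtain ⟨h₁, h₂⟩ := abs_le_of_sq_le_sq' hsq hS0
  constructor <;> linarith

theorem quadratic_nonpos_iff (hp : 0 < p) (hS0 : 0 ≤ S) (hS : S ^ 2 = b ^ 2 - 4 * p * q)
    (hx : b - S ≤ 2 * p * x) : p * x ^ 2 - b * x + q ≤ 0 ↔ 2 * p * x ≤ b + S := by
  have h := four_mul_quadratic_eq (x := x) hS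
  constructor
  · exact fun h' => (mem_roots_of_quadratic_nonpos hp hS0 hS h').2
  · intro h'
    nlinarith [mul_nonpos_of_nonpos_of_nonneg (by linarith : 2 * p * x - b - S ≤ 0)
      (by linarith : 0 ≤ 2 * p * x - b + S)]

theorem quadratic_eq_zero_of_eq_root (hp : 0 < p) (hS : S ^ 2 = b ^ 2 - 4 * p * q)
    (hx : 2 * p * x = b + S) : p * x ^ 2 - b * x + q = 0 := by
  have h := four_mul_quadratic_eq (x := x) hS
  rw [show 2 * p * x - b - S = 0 by linarith, zero_mul] at h
  simpa [hp.ne'] using h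

end Quadratic

section LinearODE

variable {E : Type*} [NormedAddCommGroup E] [NormedSpace ℝ E]

theorem eq_exp_mul_smul_of_hasDerivAt {u : ℝ → E} (a : ℝ) (hu : ∀ s, HasDerivAt u (a • u s) s)
    (s : ℝ) : u s = exp (a * s) • u 0 := by
  have hg : ∀ s, HasDerivAt (fun s => exp (-(a * s)) • u s) 0 s := by
    intro s
    have he : HasDerivAt (fun s => exp (-(a * s))) (exp (-(a * s)) * -(a * 1)) s :=
      ((hasDerivAt_id s).const_mul a).neg.exp
    exact (he.smul (hu s)).congr_deriv (by module)
  have h := is_const_of_deriv_eq_zero (fun x => (hg x).differentiableAt) (fun x => (hg x).deriv) s 0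
  rw [mul_zero, neg_zero, exp_zero, one_smul] at h
  rw [← h, smul_smul, ← exp_add, add_neg_cancel, exp_zero, one_smul]

theorem eq_exp_smul_add_exp_neg_smul_of_deriv_deriv_eq {w : ℝ → E} {β : ℝ} (hβ : β ≠ 0)
    (hw : Differentiable ℝ w) (hw' : Differentiable ℝ (deriv w))
    (hODE : ∀ s, deriv (deriv w) s = β ^ 2 • w s) {P Q : E} (hPQ : P + Q = w 0)
    (hPQ' : β • (P - Q) = deriv w 0) (s : ℝ) :
    w s = exp (β * s) • P + exp (-(β * s)) • Q := by
  have hplus := eq_exp_mul_smul_of_hasDerivAt β (u := fun s => deriv w s + β • w s)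
    (fun s => by
      refine ((hw' s).hasDerivAt.add ((hw s).hasDerivAt.const_smul β)).congr_deriv ?_
      rw [hODE]; module) s
  have hminus := eq_exp_mul_smul_of_hasDerivAt (-β) (u := fun s => deriv w s - β • w s)
    (fun s => by
      refine ((hw' s).hasDerivAt.sub ((hw s).hasDerivAt.const_smul β)).congr_deriv ?_
      rw [hODE]; module) s
  simp only [← hPQ, ← hPQ', neg_mul] at hplus hminus
  apply smul_right_injective E (mul_ne_zero two_ne_zero hβ)
  linear_combination (norm := module) hplus - hminus

end LinearODE

theorem exit_time_of_sq_sub_one_mul_exp_eq_quadratic {N : ℝ → ℝ} {κ p b q S T : ℝ}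
    (hκ : 0 < κ) (hp : 0 < p) (hN0 : ∀ s, 0 ≤ N s) (hS0 : 0 ≤ S)
    (hS : S ^ 2 = b ^ 2 - 4 * p * q) (h1 : p - b + q ≤ 0)
    (hN : ∀ s, (N s ^ 2 - 1) * exp (κ * s) = p * exp (κ * s) ^ 2 - b * exp (κ * s) + q)
    (hT : κ * T = log ((b + S) / (2 * p))) :
    0 ≤ T ∧ N T = 1 ∧ (∀ s ∈ Icc 0 T, N s ≤ 1) ∧ ∀ s, T < s → 1 < N s := by
  obtain ⟨hS_le, hS_ge⟩ :=
    mem_roots_of_quadratic_nonpos (x := 1) hp hS0 hS (by linarith)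
  have hT_root : 2 * p * exp (κ * T) = b + S := by
    rw [hT, exp_log (div_pos (by linarith) (by linarith))]
    field_simp
  have hT0 : 0 ≤ T := by
    have : 1 ≤ exp (κ * T) := by nlinarith
    exact nonneg_of_mul_nonneg_right (one_le_exp_iff.mp this) hκ
  have hle_iff : ∀ s, 0 ≤ s → (N s ≤ 1 ↔ s ≤ T) := by
    intro s hs
    have hx : b - S ≤ 2 * p * exp (κ * s) := by
      nlinarith [one_le_exp_iff.mpr (mul_nonneg hκ.le hs)]
    calc N s ≤ 1 ↔ (N s ^ 2 - 1) * exp (κ * s) ≤ 0 := by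
          rw [← sq_le_one_iff₀ (hN0 s), ← sub_nonpos]
          have h := mul_le_mul_iff_left₀ (exp_pos (κ * s)) (b := N s ^ 2 - 1) (c := 0)
          rwa [zero_mul, iff_comm] at h
      _ ↔ 2 * p * exp (κ * s) ≤ 2 * p * exp (κ * T) := by
          rw [hN s, hT_root]; exact quadratic_nonpos_iff hp hS0 hS hx
      _ ↔ s ≤ T := by
          rw [mul_le_mul_iff_right₀ (by positivity), exp_le_exp, mul_le_mul_iff_right₀ hκ]
  have hNT : N T = 1 := by
    have h := hN T
    rw [quadratic_eq_zero_of_eq_root hp hS hT_root, mul_eq_zero] at h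
    rcases h with h | h
    · exact (pow_eq_one_iff_of_nonneg (hN0 T) two_ne_zero).mp (by linarith)
    · exact absurd h (exp_pos _).ne'
  refine ⟨hT0, hNT, fun s hs => (hle_iff s hs.1).mpr hs.2, fun s hs => ?_⟩
  exact lt_of_not_ge fun h => hs.not_ge ((hle_iff s (hT0.trans hs.le)).mp h)

theorem norm_exp_smul_add_exp_neg_smul_sq_mul_exp {F : Type*} [NormedAddCommGroup F]
    [InnerProductSpace ℝ F] (P Q : F) (a : ℝ) :
    ‖exp a • P + exp (-a) • Q‖ ^ 2 * exp (2 * a) =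
      ‖P‖ ^ 2 * exp (2 * a) ^ 2 + 2 * inner ℝ P Q * exp (2 * a) + ‖Q‖ ^ 2 := by
  rw [norm_add_sq_real, norm_smul, norm_smul, real_inner_smul_left, real_inner_smul_right,
    norm_of_nonneg (exp_pos _).le, norm_of_nonneg (exp_pos _).le, exp_neg,
    show 2 * a = a + a by ring, exp_add]
  field_simp

theorem exit_time_of_eq_exp_smul_add_exp_neg_smul {F : Type*} [NormedAddCommGroup F]
    [InnerProductSpace ℝ F] {w : ℝ → F} {β T : ℝ} {P Q : F} (hβ : 0 < β) (hP : P ≠ 0)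
    (hPQ : ‖P + Q‖ ≤ 1) (hsol : ∀ s, w s = exp (β * s) • P + exp (-(β * s)) • Q)
    (hT : 2 * β * T = log ((1 - 2 * inner ℝ P Q +
      √((1 - 2 * inner ℝ P Q) ^ 2 - 4 * ‖P‖ ^ 2 * ‖Q‖ ^ 2)) / (2 * ‖P‖ ^ 2))) :
    0 ≤ (1 - 2 * inner ℝ P Q) ^ 2 - 4 * ‖P‖ ^ 2 * ‖Q‖ ^ 2 ∧
      0 ≤ T ∧ ‖w T‖ = 1 ∧ (∀ s ∈ Icc 0 T, ‖w s‖ ≤ 1) ∧ ∀ s, T < s → 1 < ‖w s‖ := by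
  have hp : 0 < ‖P‖ ^ 2 := by positivity
  have h1 : ‖P‖ ^ 2 - (1 - 2 * inner ℝ P Q) + ‖Q‖ ^ 2 ≤ 0 := by
    have := pow_le_one₀ (norm_nonneg _) hPQ (n := 2)
    rw [norm_add_sq_real] at this
    linarith
  have hD0 := discrim_nonneg_of_quadratic_nonpos (x := 1) (b := 1 - 2 * inner ℝ P Q)
    (q := ‖Q‖ ^ 2) hp (by linarith)
  refine ⟨hD0, exit_time_of_sq_sub_one_mul_exp_eq_quadratic (by positivity) hp
    (fun s => norm_nonneg (w s)) (sqrt_nonneg _) (sq_sqrt hD0) h1 (fun s => ?_) hT⟩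
  rw [hsol s, mul_assoc]
  linear_combination norm_exp_smul_add_exp_neg_smul_sq_mul_exp P Q (β * s)

theorem inner_sq_add_det_sq_fin_two (x y : EuclideanSpace ℝ (Fin 2)) :
    inner ℝ x y ^ 2 + (x 0 * y 1 - x 1 * y 0) ^ 2 = ‖x‖ ^ 2 * ‖y‖ ^ 2 := by
  simp only [EuclideanSpace.norm_sq_eq, PiLp.inner_apply, Fin.sum_univ_two, Real.norm_eq_abs,
    sq_abs, RCLike.inner_apply, conj_trivial]
  ring

theorem stmt_10_general (β : ℝ) (hβ : 0 < β)
    (w : ℝ → EuclideanSpace ℝ (Fin 2)) (hw : ContDiff ℝ 2 w)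
    (hODE : ∀ s : ℝ, deriv (deriv w) s = β ^ 2 • w s)
    (W : ℝ) (hW : W = (w 0) 0 * (deriv w 0) 1 - (w 0) 1 * (deriv w 0) 0)
    (c : ℝ)
    (hc : c ^ 2 = 1 - ‖w 0‖ ^ 2 + β⁻¹ ^ 2 * ‖deriv w 0‖ ^ 2)
    (hw0 : ‖w 0‖ ≤ 1)
    (hne : β • w 0 + deriv w 0 ≠ 0)
    (smax : ℝ)
    (hsmax : smax = (1 / (2 * β)) *
      Real.log ((1 + c ^ 2 + 2 * Real.sqrt (c ^ 2 - β⁻¹ ^ 2 * W ^ 2)) /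
        ‖w 0 + β⁻¹ • deriv w 0‖ ^ 2)) :
    β⁻¹ ^ 2 * W ^ 2 ≤ c ^ 2 ∧
    0 ≤ smax ∧
    ‖w smax‖ = 1 ∧
    (∀ s ∈ Set.Icc 0 smax, ‖w s‖ ≤ 1) ∧
    ∀ s : ℝ, smax < s → 1 < ‖w s‖ := by
  obtain ⟨P, Q, hPQ, hPQ'⟩ : ∃ P Q : EuclideanSpace ℝ (Fin 2),
      P + Q = w 0 ∧ β • (P - Q) = deriv w 0 :=
    ⟨(2 : ℝ)⁻¹ • (w 0 + β⁻¹ • deriv w 0), (2 : ℝ)⁻¹ • (w 0 - β⁻¹ • deriv w 0), by module,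
      by match_scalars <;> field_simp <;> ring⟩
  have hsol := eq_exp_smul_add_exp_neg_smul_of_deriv_deriv_eq hβ.ne'
    (hw.differentiable two_ne_zero) hw.differentiable_deriv_two hODE hPQ hPQ'
  rw [← hPQ] at hW hc hw0 hne hsmax
  rw [← hPQ'] at hW hc hne hsmax
  have hP : P ≠ 0 := by
    rintro rfl
    exact hne (by module)
  have hc2 : c ^ 2 = 1 - 4 * inner ℝ P Q := by
    rw [hc, norm_smul, mul_pow, norm_add_sq_real, norm_sub_sq_real, Real.norm_eq_abs, sq_abs]
    field_simp
    ring
  have hD : c ^ 2 - β⁻¹ ^ 2 * W ^ 2 = (1 - 2 * inner ℝ P Q) ^ 2 - 4 * ‖P‖ ^ 2 * ‖Q‖ ^ 2 := by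
    rw [hc2, hW]
    simp only [PiLp.add_apply, PiLp.smul_apply, PiLp.sub_apply, smul_eq_mul]
    field_simp
    linear_combination (-4) * inner_sq_add_det_sq_fin_two P Q
  have hA : ‖P + Q + β⁻¹ • β • (P - Q)‖ ^ 2 = 4 * ‖P‖ ^ 2 := by
    rw [inv_smul_smul₀ hβ.ne', show P + Q + (P - Q) = (2 : ℝ) • P by module, norm_smul,
      mul_pow, norm_two]
    norm_num
  have hT : 2 * β * smax = log ((1 - 2 * inner ℝ P Q +
      √((1 - 2 * inner ℝ P Q) ^ 2 - 4 * ‖P‖ ^ 2 * ‖Q‖ ^ 2)) / (2 * ‖P‖ ^ 2)) := by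
    rw [hsmax, hD, hA, hc2]
    field_simp
    ring_nf
  obtain ⟨hD0, hexit⟩ := exit_time_of_eq_exp_smul_add_exp_neg_smul hβ hP hw0 hsol hT
  exact ⟨by linarith, hexit⟩

/-- Along a normalized-curvature trajectory `w` (a C² curve in ℝ² with
`w'' = β² w`) with `‖w(0)‖ ≤ 1` and `βw(0) + w'(0) ≠ 0`, one has `𝔠² ≥ β⁻²W²`, the
number `s_max = (1/(2β)) ln((1 + 𝔠² + 2√(𝔠² − β⁻²W²))/‖w(0) + β⁻¹w'(0)‖²)` is
nonnegative, `‖w(s_max)‖ = 1`, `‖w(s)‖ ≤ 1` on `[0, s_max]`, and `‖w(s)‖ > 1` for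
`s > s_max`. -/
theorem stmt_10 (β : ℝ) (hβ : 0 < β)
    (w : ℝ → EuclideanSpace ℝ (Fin 2)) (hw : ContDiff ℝ 2 w)
    (hODE : ∀ s : ℝ, deriv (deriv w) s = β ^ 2 • w s)
    (W : ℝ) (hW : W = (w 0) 0 * (deriv w 0) 1 - (w 0) 1 * (deriv w 0) 0)
    (c : ℝ) (hc0 : 0 ≤ c)
    (hc : c ^ 2 = 1 - ‖w 0‖ ^ 2 + β⁻¹ ^ 2 * ‖deriv w 0‖ ^ 2)
    (hw0 : ‖w 0‖ ≤ 1)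
    (hne : β • w 0 + deriv w 0 ≠ 0)
    (smax : ℝ)
    (hsmax : smax = (1 / (2 * β)) *
      Real.log ((1 + c ^ 2 + 2 * Real.sqrt (c ^ 2 - β⁻¹ ^ 2 * W ^ 2)) /
        ‖w 0 + β⁻¹ • deriv w 0‖ ^ 2)) :
    β⁻¹ ^ 2 * W ^ 2 ≤ c ^ 2 ∧
    0 ≤ smax ∧
    ‖w smax‖ = 1 ∧
    (∀ s ∈ Set.Icc 0 smax, ‖w s‖ ≤ 1) ∧
    ∀ s : ℝ, smax < s → 1 < ‖w s‖ :=
  stmt_10_general β hβ w hw hODE W hW c hc hw0 hne smax hsmax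
end

section
/- Let w : ℝ → ℝ² be a normalized-curvature trajectory (i.e., twice continuously differentiable with w''(s) = β² w(s) for all s) with ‖w(0)‖ ≤ 1. Then ‖w(s)‖ ≤ 1 for all s ≥ 0 if and only if β w(0) + w'(0) = 0. -/
/-!
Since `w'' - β² w = (d/ds + b)(d/ds - b) w` for `b = ±β`, each `w' - b w` is a pure exponential
`e^{-bs} (w'(0) - b w(0))`. Subtracting the two gives
`2β w(s) = e^{βs} (w'(0) + β w(0)) - e^{-βs} (w'(0) - β w(0))`: a bounded forward trajectory cannot
carry the growing mode, and without it `w(s) = e^{-βs} w(0)`.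
-/

open Real Filter

section
variable {E : Type*} [NormedAddCommGroup E] [NormedSpace ℝ E] {w : ℝ → E} {β : ℝ}
  (hw : Differentiable ℝ w) (hw' : Differentiable ℝ (deriv w))
  (hODE : ∀ s, deriv (deriv w) s = β ^ 2 • w s)
include hw hw' hODE

theorem deriv_sub_smul_eq_exp_smul {b : ℝ} (hb : b ^ 2 = β ^ 2) (s : ℝ) :
    deriv w s - b • w s = exp (-(b * s)) • (deriv w 0 - b • w 0) := by
  have hderiv : ∀ t, HasDerivAt (fun t ↦ exp (b * t) • (deriv w t - b • w t)) 0 t := by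
    intro t
    have hexp : HasDerivAt (fun t ↦ exp (b * t)) (exp (b * t) * (b * 1)) t :=
      ((hasDerivAt_id t).const_mul b).exp
    refine (hexp.smul ((hw' t).hasDerivAt.sub ((hw t).hasDerivAt.const_smul b))).congr_deriv ?_
    rw [Pi.sub_apply, Pi.smul_apply, hODE, ← hb]
    module
  have hconst := is_const_of_deriv_eq_zero (fun t ↦ (hderiv t).differentiableAt)
    (fun t ↦ (hderiv t).deriv) s 0
  simp only [mul_zero, exp_zero, one_smul] at hconst
  rw [← hconst, smul_smul, ← exp_add]
  simp

theorem two_mul_smul_eq_exp_smul_sub_exp_smul (s : ℝ) :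
    (2 * β) • w s = exp (β * s) • (deriv w 0 + β • w 0)
      - exp (-(β * s)) • (deriv w 0 - β • w 0) := by
  have hplus := deriv_sub_smul_eq_exp_smul hw hw' hODE (b := -β) (neg_sq β) s
  have hminus := deriv_sub_smul_eq_exp_smul hw hw' hODE (b := β) rfl s
  simp only [neg_smul, sub_neg_eq_add, neg_mul, neg_neg] at hplus
  rw [← hplus, ← hminus]
  module

theorem deriv_add_smul_eq_zero_of_norm_le (hβ : 0 < β) {M : ℝ}
    (hbound : ∀ s, 0 ≤ s → ‖w s‖ ≤ M) : deriv w 0 + β • w 0 = 0 := by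
  set c := deriv w 0 + β • w 0
  set a := deriv w 0 - β • w 0
  by_contra hc
  have hgrowth : Tendsto (fun s ↦ exp (β * s) * ‖c‖) atTop atTop :=
    (tendsto_exp_atTop.comp (tendsto_id.const_mul_atTop hβ)).atTop_mul_const
      (norm_pos_iff.mpr hc)
  obtain ⟨s, hlarge, hs⟩ :=
    ((hgrowth.eventually_gt_atTop (2 * β * M + ‖a‖)).and (eventually_ge_atTop 0)).exists
  have hdecay : exp (-(β * s)) ≤ 1 := exp_le_one_iff.mpr (by nlinarith)
  have : exp (β * s) * ‖c‖ ≤ 2 * β * M + ‖a‖ :=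
    calc exp (β * s) * ‖c‖ = ‖(2 * β) • w s + exp (-(β * s)) • a‖ := by
          rw [two_mul_smul_eq_exp_smul_sub_exp_smul hw hw' hODE, sub_add_cancel, norm_smul,
            norm_of_nonneg (exp_pos _).le]
      _ ≤ 2 * β * ‖w s‖ + exp (-(β * s)) * ‖a‖ := by
          grw [norm_add_le, norm_smul, norm_smul, norm_of_nonneg (by positivity : 0 ≤ 2 * β),
            norm_of_nonneg (exp_pos _).le]
      _ ≤ 2 * β * M + ‖a‖ := by
          gcongr
          · exact hbound s hs
          · exact mul_le_of_le_one_left (norm_nonneg a) hdecay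
  linarith

theorem eq_exp_smul_of_deriv_add_smul_eq_zero (hβ : β ≠ 0)
    (hc : deriv w 0 + β • w 0 = 0) (s : ℝ) : w s = exp (-(β * s)) • w 0 := by
  have h := two_mul_smul_eq_exp_smul_sub_exp_smul hw hw' hODE s
  rw [hc, show deriv w 0 - β • w 0 = -(2 * β) • w 0 by
    rw [eq_neg_of_add_eq_zero_left hc]; module] at h
  refine smul_right_injective E (mul_ne_zero two_ne_zero hβ) ?_
  simp only [h]
  module

end

/-- A normalized-curvature trajectory `w` (a C² curve in ℝ² with
`w'' = β² w`) with `‖w(0)‖ ≤ 1` satisfies `‖w(s)‖ ≤ 1` for all `s ≥ 0` if and only if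
`βw(0) + w'(0) = 0`. -/
theorem stmt_11 (β : ℝ) (hβ : 0 < β)
    (w : ℝ → EuclideanSpace ℝ (Fin 2)) (hw : ContDiff ℝ 2 w)
    (hODE : ∀ s : ℝ, deriv (deriv w) s = β ^ 2 • w s)
    (hw0 : ‖w 0‖ ≤ 1) :
    (∀ s : ℝ, 0 ≤ s → ‖w s‖ ≤ 1) ↔ β • w 0 + deriv w 0 = 0 := by
  have hw1 : Differentiable ℝ w := hw.differentiable two_ne_zero
  have hw2 : Differentiable ℝ (deriv w) :=
    (hw.iterate_deriv' 1 1).differentiable one_ne_zero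
  rw [add_comm]
  refine ⟨deriv_add_smul_eq_zero_of_norm_le hw1 hw2 hODE hβ, fun hc s hs ↦ ?_⟩
  rw [eq_exp_smul_of_deriv_add_smul_eq_zero hw1 hw2 hODE hβ.ne' hc, norm_smul,
    norm_of_nonneg (exp_pos _).le]
  exact mul_le_one₀ (exp_le_one_iff.mpr (by nlinarith)) (norm_nonneg _) hw0
end

section
/- Fix β > 0 and real numbers r, ρ with 0 ≤ r ≤ 1, ρ ≥ 0 and βr ≠ ρ, and set c² := 1 − r² + β⁻²ρ². For θ ∈ ℝ set D(θ) := r² + β⁻²ρ² + 2β⁻¹ r ρ cos θ and, whenever D(θ) > 0, f(θ) := (1/(2β)) ln( (1 + c² + 2√(c² − β⁻² r² ρ² sin²θ)) / D(θ) ). Then c² − β⁻² r² ρ² sin²θ ≥ 0 for all θ, D(π) > 0, and f(θ) ≤ f(π) for every θ with D(θ) > 0. (That is, among trajectories with ‖w(0)‖ = r and ‖w'(0)‖ = ρ fixed, the maximal cuspless length s_max is largest when w'(0) is antiparallel to w(0), i.e. when the Wronskian W = rρ sin θ vanishes and w(0)·w'(0) = rρ cos θ ≤ 0.) -/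
/-! Both parts of the quotient are extremal at `θ = π`: the numerator is largest where
`sin θ = 0`, and the denominator `D θ` is smallest where `cos θ = -1`, since its `cos θ`
coefficient `2 β⁻¹ r ρ` is nonnegative. There `D π = (r - β⁻¹ ρ) ^ 2`, positive exactly
because `β r ≠ ρ`. -/

open Real

lemma mul_sq_mul_sin_sq_le {a b r : ℝ} (hr : r ^ 2 ≤ 1) (θ : ℝ) :
    a ^ 2 * r ^ 2 * b ^ 2 * sin θ ^ 2 ≤ 1 - r ^ 2 + a ^ 2 * b ^ 2 := by
  -- the gap at `sin θ ^ 2 = 1` is `(1 - r ^ 2) * (1 + a ^ 2 * b ^ 2)`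
  have hgap : 0 ≤ (1 - r ^ 2) * (1 + a ^ 2 * b ^ 2) := by
    have : 0 ≤ 1 - r ^ 2 := by linarith
    positivity
  nlinarith [sin_sq_le_one θ, sq_nonneg (a * r * b)]

lemma sub_mul_sq_le_add_mul_cos {a b r : ℝ} (h : 0 ≤ a * r * b) (θ : ℝ) :
    (r - a * b) ^ 2 ≤ r ^ 2 + a ^ 2 * b ^ 2 + 2 * a * r * b * cos θ := by
  nlinarith [neg_one_le_cos θ]

/-- For fixed `β > 0`, `0 ≤ r ≤ 1`, `ρ ≥ 0` with `βr ≠ ρ`, setting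
`c² = 1 − r² + β⁻²ρ²`, `D(θ) = r² + β⁻²ρ² + 2β⁻¹rρ cos θ` and, for `D(θ) > 0`,
`f(θ) = (1/(2β)) ln((1 + c² + 2√(c² − β⁻²r²ρ² sin²θ))/D(θ))`, one has
`c² − β⁻²r²ρ² sin²θ ≥ 0` for all `θ`, `D(π) > 0`, and `f(θ) ≤ f(π)` whenever
`D(θ) > 0`: the maximal cuspless length is largest for antiparallel `w'(0)`. -/
theorem stmt_12 (β r ρ : ℝ) (hβ : 0 < β)
    (hr0 : 0 ≤ r) (hr1 : r ≤ 1) (hρ : 0 ≤ ρ) (hne : β * r ≠ ρ)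
    (c2 : ℝ) (hc2 : c2 = 1 - r ^ 2 + β⁻¹ ^ 2 * ρ ^ 2)
    (D : ℝ → ℝ) (hD : ∀ θ, D θ = r ^ 2 + β⁻¹ ^ 2 * ρ ^ 2 + 2 * β⁻¹ * r * ρ * Real.cos θ)
    (f : ℝ → ℝ)
    (hf : ∀ θ, f θ = (1 / (2 * β)) *
      Real.log ((1 + c2 + 2 * Real.sqrt (c2 - β⁻¹ ^ 2 * r ^ 2 * ρ ^ 2 * Real.sin θ ^ 2)) /
        D θ)) :
    (∀ θ : ℝ, 0 ≤ c2 - β⁻¹ ^ 2 * r ^ 2 * ρ ^ 2 * Real.sin θ ^ 2) ∧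
    0 < D Real.pi ∧
    ∀ θ : ℝ, 0 < D θ → f θ ≤ f Real.pi := by
  have hdisc (θ : ℝ) : 0 ≤ c2 - β⁻¹ ^ 2 * r ^ 2 * ρ ^ 2 * sin θ ^ 2 :=
    hc2 ▸ sub_nonneg.2 (mul_sq_mul_sin_sq_le (by nlinarith) θ)
  have hc2_nonneg : 0 ≤ c2 := by simpa using hdisc 0
  have hDπ : D π = (r - β⁻¹ * ρ) ^ 2 := by rw [hD, cos_pi]; ring
  have hDπ_pos : 0 < D π := by
    have : r - β⁻¹ * ρ ≠ 0 := by
      rw [sub_ne_zero]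
      rintro rfl
      exact hne (by field_simp)
    rw [hDπ]
    positivity
  have hDπ_le (θ : ℝ) : D π ≤ D θ := hDπ ▸ hD θ ▸ sub_mul_sq_le_add_mul_cos (by positivity) θ
  refine ⟨hdisc, hDπ_pos, fun θ hθ => ?_⟩
  rw [hf, hf, sin_pi]
  gcongr ?_ * log ((1 + _ + 2 * sqrt ?_) / ?_)
  · nlinarith [sq_nonneg (β⁻¹ * r * ρ * sin θ)]
  · exact hDπ_le θ
end

section
/- Let w : ℝ → ℝ² be a normalized-curvature trajectory (i.e., twice continuously differentiable with w''(s) = β² w(s) for all s) with Wronskian W ≠ 0 and 𝔠 > 0, and set q := W²/(𝔠²β²). Fix s > 0 and assume that for all σ ∈ [0,s]: ‖w(σ)‖ ≤ 1 and ‖w(σ)‖² > q. Define the 2×2 real matrix A(σ) := (‖w(σ)‖² − q)⁻¹ · [[ w(σ)·w'(σ), −(W/(𝔠β))√(𝔠²β² − ‖w'(σ)‖²) ], [ (W/(𝔠β))√(𝔠²β² − ‖w'(σ)‖²), w(σ)·w'(σ) ]] and φ(s) := ∫₀ˢ (W/(𝔠β)) √(𝔠²β² − ‖w'(σ)‖²)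 / (‖w(σ)‖² − q) dσ. Then the matrix exponential of ∫₀ˢ A(σ) dσ equals √( (‖w(s)‖² − q)/(‖w(0)‖² − q) ) · [[cos φ(s), −sin φ(s)], [sin φ(s), cos φ(s)]]. -/
/-!
The integrand `A σ` lies in the copy `{!![x, -y; y, x]}` of `ℂ` inside the real
`2 × 2` matrices, so `∫ A = !![a, -φ s; φ s, a]` and its exponential is `exp a` times
the rotation by `φ s`. The diagonal entry is half a logarithmic derivative,
`⟪w, w'⟫ / (‖w‖² - q) = (log (‖w‖² - q))' / 2`, which makes `exp a` the stated square root.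
-/

open Set Real

theorem intervalIntegral.integral_deriv_div_eq_log {u u' : ℝ → ℝ} {a b : ℝ}
    (hu : ∀ x ∈ uIcc a b, HasDerivAt u (u' x) x) (hu' : ContinuousOn u' (uIcc a b))
    (hne : ∀ x ∈ uIcc a b, u x ≠ 0) :
    ∫ x in a..b, u' x / u x = log (u b / u a) := by
  have hlog : ∀ x ∈ uIcc a b, HasDerivAt (fun t => log (u t)) (u' x / u x) x := fun x hx =>
    ((hasDerivAt_log (hne x hx)).comp x (hu x hx)).congr_deriv (by ring)
  have hcont : ContinuousOn u (uIcc a b) := fun x hx => (hu x hx).continuousAt.continuousWithinAt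
  rw [intervalIntegral.integral_eq_sub_of_hasDerivAt hlog (hu'.div hcont hne).intervalIntegrable,
    log_div (hne b right_mem_uIcc) (hne a left_mem_uIcc)]

theorem integral_inner_deriv_div_norm_sq_sub {E : Type*} [NormedAddCommGroup E]
    [InnerProductSpace ℝ E] {w : ℝ → E} (hw : ContDiff ℝ 1 w) (q : ℝ) {a b : ℝ}
    (hq : ∀ σ ∈ uIcc a b, ‖w σ‖ ^ 2 ≠ q) :
    ∫ σ in a..b, inner ℝ (w σ) (deriv w σ) / (‖w σ‖ ^ 2 - q) =
      log ((‖w b‖ ^ 2 - q) / (‖w a‖ ^ 2 - q)) / 2 := by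
  have hderiv :
      ∀ σ, HasDerivAt (fun t => ‖w t‖ ^ 2 - q) (2 * inner ℝ (w σ) (deriv w σ)) σ :=
    fun σ => ((hw.differentiable one_ne_zero σ).hasDerivAt.norm_sq).sub_const q
  have hcont : Continuous fun σ => 2 * inner ℝ (w σ) (deriv w σ) :=
    continuous_const.mul (hw.continuous.inner (hw.continuous_deriv le_rfl))
  rw [← intervalIntegral.integral_deriv_div_eq_log (fun σ _ => hderiv σ) hcont.continuousOn
    fun σ hσ => sub_ne_zero.2 (hq σ hσ), ← intervalIntegral.integral_div]
  congr 1 with σ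
  ring

open scoped Matrix.Norms.L2Operator in
theorem Matrix.exp_fin_two_conformal (a b : ℝ) :
    NormedSpace.exp !![a, -b; b, a] = exp a • !![cos b, -sin b; sin b, cos b] := by
  let f := Algebra.leftMulMatrix Complex.basisOneI
  have hf : Continuous f := f.toLinearMap.continuous_of_finiteDimensional
  have h : f (Complex.exp ⟨a, b⟩) = NormedSpace.exp !![a, -b; b, a] := by
    rw [Complex.exp_eq_exp_ℂ, NormedSpace.map_exp f hf, Algebra.leftMulMatrix_complex]
  rw [← h, Algebra.leftMulMatrix_complex]
  ext i j
  fin_cases i <;> fin_cases j <;> simp [Complex.exp_re, Complex.exp_im, mul_comm]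

theorem stmt_13_general (β : ℝ)
    (w : ℝ → EuclideanSpace ℝ (Fin 2)) (hw : ContDiff ℝ 2 w)
    (W : ℝ)
    (c : ℝ)
    (q : ℝ)
    (s : ℝ) (hs : 0 < s)
    (hwq : ∀ σ ∈ Set.Icc 0 s, q < ‖w σ‖ ^ 2)
    (A : ℝ → Matrix (Fin 2) (Fin 2) ℝ)
    (hA : ∀ σ : ℝ, A σ = (‖w σ‖ ^ 2 - q)⁻¹ •
      !![(inner ℝ (w σ) (deriv w σ) : ℝ),
          -(W / (c * β)) * Real.sqrt (c ^ 2 * β ^ 2 - ‖deriv w σ‖ ^ 2);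
         (W / (c * β)) * Real.sqrt (c ^ 2 * β ^ 2 - ‖deriv w σ‖ ^ 2),
          (inner ℝ (w σ) (deriv w σ) : ℝ)])
    (φ : ℝ → ℝ)
    (hφ : ∀ t : ℝ, φ t = ∫ σ in (0:ℝ)..t,
      (W / (c * β)) * Real.sqrt (c ^ 2 * β ^ 2 - ‖deriv w σ‖ ^ 2) / (‖w σ‖ ^ 2 - q)) :
    NormedSpace.exp (Matrix.of fun i j => ∫ σ in (0:ℝ)..s, A σ i j) =
      Real.sqrt ((‖w s‖ ^ 2 - q) / (‖w 0‖ ^ 2 - q)) •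
        !![Real.cos (φ s), -Real.sin (φ s); Real.sin (φ s), Real.cos (φ s)] := by
  set a := ∫ σ in (0:ℝ)..s, inner ℝ (w σ) (deriv w σ) / (‖w σ‖ ^ 2 - q) with ha
  have hmat : (Matrix.of fun i j => ∫ σ in (0:ℝ)..s, A σ i j) = !![a, -φ s; φ s, a] := by
    ext i j
    fin_cases i <;> fin_cases j <;>
      simp [hA, hφ, ha, inv_mul_eq_div, neg_div, intervalIntegral.integral_neg]
  have hwq' : ∀ σ ∈ uIcc 0 s, q < ‖w σ‖ ^ 2 := by rwa [uIcc_of_le hs.le]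
  have ha_log : a = log ((‖w s‖ ^ 2 - q) / (‖w 0‖ ^ 2 - q)) / 2 :=
    integral_inner_deriv_div_norm_sq_sub (hw.of_le one_le_two) q fun σ hσ => (hwq' σ hσ).ne'
  have hratio : 0 < (‖w s‖ ^ 2 - q) / (‖w 0‖ ^ 2 - q) :=
    div_pos (sub_pos.2 (hwq' s right_mem_uIcc)) (sub_pos.2 (hwq' 0 left_mem_uIcc))
  rw [hmat, Matrix.exp_fin_two_conformal, ha_log, exp_half, exp_log hratio]

/-- Along a normalized-curvature trajectory `w` (a C² curve in ℝ² with
`w'' = β² w`) with nonzero Wronskian `W` and `𝔠 > 0`, with `q = W²/(𝔠²β²)`, if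
`‖w‖ ≤ 1` and `‖w‖² > q` on `[0,s]`, then the matrix exponential of `∫₀ˢ A(σ)dσ`
(with `A` as in Theorem 4.2/Corollary `phi`) is the scaled rotation
`√((‖w(s)‖² − q)/(‖w(0)‖² − q)) · Rot(φ(s))`. -/
theorem stmt_13 (β : ℝ) (hβ : 0 < β)
    (w : ℝ → EuclideanSpace ℝ (Fin 2)) (hw : ContDiff ℝ 2 w)
    (hODE : ∀ s : ℝ, deriv (deriv w) s = β ^ 2 • w s)
    (W : ℝ) (hWdef : W = (w 0) 0 * (deriv w 0) 1 - (w 0) 1 * (deriv w 0) 0)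
    (hW : W ≠ 0)
    (c : ℝ) (hc0 : 0 < c)
    (hc : c ^ 2 = 1 - ‖w 0‖ ^ 2 + β⁻¹ ^ 2 * ‖deriv w 0‖ ^ 2)
    (q : ℝ) (hq : q = W ^ 2 / (c ^ 2 * β ^ 2))
    (s : ℝ) (hs : 0 < s)
    (hw1 : ∀ σ ∈ Set.Icc 0 s, ‖w σ‖ ≤ 1)
    (hwq : ∀ σ ∈ Set.Icc 0 s, q < ‖w σ‖ ^ 2)
    (A : ℝ → Matrix (Fin 2) (Fin 2) ℝ)
    (hA : ∀ σ : ℝ, A σ = (‖w σ‖ ^ 2 - q)⁻¹ •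
      !![(inner ℝ (w σ) (deriv w σ) : ℝ),
          -(W / (c * β)) * Real.sqrt (c ^ 2 * β ^ 2 - ‖deriv w σ‖ ^ 2);
         (W / (c * β)) * Real.sqrt (c ^ 2 * β ^ 2 - ‖deriv w σ‖ ^ 2),
          (inner ℝ (w σ) (deriv w σ) : ℝ)])
    (φ : ℝ → ℝ)
    (hφ : ∀ t : ℝ, φ t = ∫ σ in (0:ℝ)..t,
      (W / (c * β)) * Real.sqrt (c ^ 2 * β ^ 2 - ‖deriv w σ‖ ^ 2) / (‖w σ‖ ^ 2 - q)) :
    NormedSpace.exp (Matrix.of fun i j => ∫ σ in (0:ℝ)..s, A σ i j) =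
      Real.sqrt ((‖w s‖ ^ 2 - q) / (‖w 0‖ ^ 2 - q)) •
        !![Real.cos (φ s), -Real.sin (φ s); Real.sin (φ s), Real.cos (φ s)] :=
  stmt_13_general β w hw W c q s hs hwq A hA φ hφ
end

section
/- Let w : ℝ → ℝ² be a normalized-curvature trajectory (i.e., twice continuously differentiable with w''(s) = β² w(s) for all s) with Wronskian W ≠ 0 and 𝔠 > 0, and set q := W²/(𝔠²β²). Fix s > 0 and assume that for all σ ∈ [0,s]: ‖w(σ)‖ ≤ 1 and ‖w(σ)‖² > q. Define the 2×2 real matrix A(σ) := (‖w(σ)‖² − q)⁻¹ · [[ w(σ)·w'(σ), −(W/(𝔠β))√(𝔠²β² − ‖w'(σ)‖²) ], [ (W/(𝔠β))√(𝔠²β² − ‖w'(σ)‖²), w(σ)·w'(σ) ]] and φ(s) := ∫₀ˢ (W/(𝔠β)) √(𝔠²β² − ‖w'(σ)‖²) / (‖w(σ)‖² − q) dσ. If Y : [0,s] → ℝ² is differentiable with Y'(σ) = A(σ) Y(σ) for all σ ∈ [0,s], then Y(s) = √( (‖w(s)‖² − q)/(‖w(0)‖² − q) ) · [[cos φ(s),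 −sin φ(s)], [sin φ(s), cos φ(s)]] · Y(0). -/
/-!
Identifying `ℝ²` with `ℂ` through the basis `1, I`, the matrix `A σ` is multiplication by
`ζ σ = (⟪w, w'⟫ + i k) / (‖w‖² - q)`, where `k` is the common off-diagonal numerator, so the
system `Y' = A Y` becomes the scalar equation `z' = ζ z`, solved by `z s = exp (g s - g 0) z 0`
for any primitive `g` of `ζ` (the product `exp (-g) z` has zero derivative). Since `‖w‖² - q` has
derivative `2 ⟪w, w'⟫`, one primitive is `g = ½ log (‖w‖² - q) + i φ`, and
`exp (g s - g 0) = √((‖w s‖² - q) / (‖w 0‖² - q)) · exp (i φ s)`, which acts as the claimed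
scaled rotation.
-/

open Set Complex Matrix

theorem ContinuousOn.hasDerivWithinAt_integral_Icc {E : Type*} [NormedAddCommGroup E]
    [NormedSpace ℝ E] [CompleteSpace E] {f : ℝ → E} {a b x : ℝ}
    (hf : ContinuousOn f (Icc a b)) (hx : x ∈ Icc a b) :
    HasDerivWithinAt (fun t => ∫ y in a..t, f y) (f x) (Icc a b) x := by
  have : Fact (x ∈ Icc a b) := ⟨hx⟩
  refine intervalIntegral.integral_hasDerivWithinAt_right ?_
    (hf.stronglyMeasurableAtFilter_nhdsWithin measurableSet_Icc x) (hf x hx)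
  refine (hf.mono ?_).intervalIntegrable
  rw [uIcc_of_le hx.1]
  exact Icc_subset_Icc_right hx.2

theorem Complex.eq_exp_sub_mul_of_hasDerivWithinAt {g ζ z : ℝ → ℂ} {a b : ℝ} (hab : a ≤ b)
    (hg : ∀ x ∈ Icc a b, HasDerivWithinAt g (ζ x) (Icc a b) x)
    (hz : ∀ x ∈ Icc a b, HasDerivWithinAt z (ζ x * z x) (Icc a b) x) :
    z b = exp (g b - g a) * z a := by
  have hderiv : ∀ x ∈ Icc a b,
      HasDerivWithinAt (fun t => exp (-g t) * z t) 0 (Icc a b) x := fun x hx =>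
    ((hg x hx).neg.cexp.mul (hz x hx)).congr_deriv (by ring)
  have hconst := constant_of_has_deriv_right_zero
    (fun x hx => (hderiv x hx).continuousWithinAt)
    (fun x hx => (hderiv x (Ico_subset_Icc_self hx)).mono_of_mem_nhdsWithin
      (Icc_mem_nhdsGE_of_mem hx)) b (right_mem_Icc.2 hab)
  calc z b = exp (g b) * (exp (-g b) * z b) := by rw [← mul_assoc, ← exp_add]; simp
    _ = exp (g b - g a) * z a := by
      rw [hconst, ← mul_assoc, ← exp_add, sub_eq_add_neg]

theorem Algebra.leftMulMatrix_mulVec_equivFun {ι R S : Type*} [Fintype ι] [DecidableEq ι]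
    [CommRing R] [Ring S] [Algebra R S] (b : Module.Basis ι R S) (x y : S) :
    leftMulMatrix b x *ᵥ b.equivFun y = b.equivFun (x * y) :=
  leftMulMatrix_mulVec_repr b x y

theorem Matrix.mulVec_eq_of_hasDerivWithinAt_leftMulMatrix_basisOneI {Y : ℝ → Fin 2 → ℝ}
    {g ζ : ℝ → ℂ} {a b : ℝ} (hab : a ≤ b)
    (hg : ∀ x ∈ Icc a b, HasDerivWithinAt g (ζ x) (Icc a b) x)
    (hY : ∀ x ∈ Icc a b,
      HasDerivWithinAt Y (Algebra.leftMulMatrix basisOneI (ζ x) *ᵥ Y x) (Icc a b) x) :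
    Y b = Algebra.leftMulMatrix basisOneI (exp (g b - g a)) *ᵥ Y a := by
  let e := basisOneI.equivFun.toContinuousLinearEquiv
  have he : ∀ x, Y x = e (e.symm (Y x)) := fun x => (e.apply_symm_apply _).symm
  have key := Complex.eq_exp_sub_mul_of_hasDerivWithinAt (z := fun x => e.symm (Y x)) hab hg
    fun x hx => by
      have := (e.symm : (Fin 2 → ℝ) →L[ℝ] ℂ).hasFDerivAt.comp_hasDerivWithinAt x (hY x hx)
      refine this.congr_deriv ?_
      rw [he x, e.symm_apply_apply]
      exact (congrArg e.symm (Algebra.leftMulMatrix_mulVec_equivFun basisOneI _ _)).trans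
        (e.symm_apply_apply _)
  rw [he b, he a, key]
  exact (Algebra.leftMulMatrix_mulVec_equivFun basisOneI _ _).symm

theorem Algebra.leftMulMatrix_basisOneI_exp_mul_I (θ : ℝ) :
    leftMulMatrix basisOneI (exp (θ * I)) =
      !![Real.cos θ, -Real.sin θ; Real.sin θ, Real.cos θ] := by
  rw [leftMulMatrix_complex, exp_ofReal_mul_I_re, exp_ofReal_mul_I_im]

theorem Complex.exp_sub_half_log_add_mul_I {x y : ℝ} (hx : 0 < x) (hy : 0 < y) (θ₁ θ₂ : ℝ) :
    exp ((↑(Real.log x / 2) + θ₁ * I) - (↑(Real.log y / 2) + θ₂ * I)) =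
      √(x / y) • exp (↑(θ₁ - θ₂) * I) := by
  have hsqrt : Real.exp ((Real.log x - Real.log y) / 2) = √(x / y) := by
    rw [← Real.log_div hx.ne' hy.ne', ← Real.log_sqrt (div_pos hx hy).le,
      Real.exp_log (Real.sqrt_pos.2 (div_pos hx hy))]
  rw [← hsqrt, Complex.real_smul, ofReal_exp, ← exp_add]
  push_cast
  ring_nf

theorem stmt_14_general (β : ℝ)
    (w : ℝ → EuclideanSpace ℝ (Fin 2)) (hw : ContDiff ℝ 2 w)
    (W : ℝ) (c : ℝ) (q : ℝ) (s : ℝ) (hs : 0 < s)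
    (hwq : ∀ σ ∈ Set.Icc 0 s, q < ‖w σ‖ ^ 2)
    (A : ℝ → Matrix (Fin 2) (Fin 2) ℝ)
    (hA : ∀ σ : ℝ, A σ = (‖w σ‖ ^ 2 - q)⁻¹ •
      !![(inner ℝ (w σ) (deriv w σ) : ℝ),
          -(W / (c * β)) * Real.sqrt (c ^ 2 * β ^ 2 - ‖deriv w σ‖ ^ 2);
         (W / (c * β)) * Real.sqrt (c ^ 2 * β ^ 2 - ‖deriv w σ‖ ^ 2),
          (inner ℝ (w σ) (deriv w σ) : ℝ)])
    (φ : ℝ → ℝ)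
    (hφ : ∀ t : ℝ, φ t = ∫ σ in (0:ℝ)..t,
      (W / (c * β)) * Real.sqrt (c ^ 2 * β ^ 2 - ‖deriv w σ‖ ^ 2) / (‖w σ‖ ^ 2 - q))
    (Y : ℝ → Fin 2 → ℝ)
    (hY : ∀ σ ∈ Set.Icc 0 s, HasDerivWithinAt Y ((A σ).mulVec (Y σ)) (Set.Icc 0 s) σ) :
    Y s = (Real.sqrt ((‖w s‖ ^ 2 - q) / (‖w 0‖ ^ 2 - q)) •
        !![Real.cos (φ s), -Real.sin (φ s); Real.sin (φ s), Real.cos (φ s)]).mulVec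
      (Y 0) := by
  set u : ℝ → ℝ := fun σ => ‖w σ‖ ^ 2 - q
  set k : ℝ → ℝ := fun σ => W / (c * β) * √(c ^ 2 * β ^ 2 - ‖deriv w σ‖ ^ 2)
  have hu_pos : ∀ σ ∈ Icc 0 s, 0 < u σ := fun σ hσ => sub_pos.2 (hwq σ hσ)
  have hu : ∀ σ, HasDerivAt u (2 * inner ℝ (w σ) (deriv w σ)) σ := fun σ =>
    ((hw.differentiable two_ne_zero σ).hasDerivAt.norm_sq).sub_const q
  have hk : Continuous k := continuous_const.mul
    (Real.continuous_sqrt.comp (continuous_const.sub ((hw.continuous_deriv one_le_two).norm.pow 2)))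
  have hφ' : ∀ σ ∈ Icc 0 s, HasDerivWithinAt φ (k σ / u σ) (Icc 0 s) σ := by
    rw [funext hφ]
    exact fun σ hσ => ContinuousOn.hasDerivWithinAt_integral_Icc (f := fun σ => k σ / u σ)
      (hk.continuousOn.div (fun σ _ => (hu σ).continuousAt.continuousWithinAt)
        fun σ hσ => (hu_pos σ hσ).ne') hσ
  let g : ℝ → ℂ := fun σ => ↑(Real.log (u σ) / 2) + φ σ * I
  let ζ : ℝ → ℂ := fun σ => (u σ)⁻¹ • ⟨inner ℝ (w σ) (deriv w σ), k σ⟩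
  have hg : ∀ σ ∈ Icc 0 s, HasDerivWithinAt g (ζ σ) (Icc 0 s) σ := fun σ hσ => by
    refine ((((hu σ).log (hu_pos σ hσ).ne').div_const 2).hasDerivWithinAt.ofReal_comp.add
      ((hφ' σ hσ).ofReal_comp.mul_const I)).congr_deriv ?_
    change _ = (u σ)⁻¹ • (⟨_, _⟩ : ℂ)
    rw [mk_eq_add_mul_I, real_smul]
    push_cast
    ring
  have hAζ : ∀ σ, A σ = Algebra.leftMulMatrix basisOneI (ζ σ) := fun σ => by
    rw [hA, map_smul, Algebra.leftMulMatrix_complex, neg_mul]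
  rw [Matrix.mulVec_eq_of_hasDerivWithinAt_leftMulMatrix_basisOneI (Y := Y) hs.le hg
      (fun σ hσ => hAζ σ ▸ hY σ hσ),
    exp_sub_half_log_add_mul_I (hu_pos s (right_mem_Icc.2 hs.le)) (hu_pos 0 (left_mem_Icc.2 hs.le)),
    map_smul, hφ 0, intervalIntegral.integral_same, sub_zero,
    Algebra.leftMulMatrix_basisOneI_exp_mul_I]

/-- Along a normalized-curvature trajectory `w` (a C² curve in ℝ² with
`w'' = β² w`) with nonzero Wronskian `W` and `𝔠 > 0`, with `q = W²/(𝔠²β²)`, if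
`‖w‖ ≤ 1` and `‖w‖² > q` on `[0,s]`, then any solution `Y` of `Y' = A Y` on `[0,s]`
satisfies `Y(s) = √((‖w(s)‖² − q)/(‖w(0)‖² − q)) · Rot(φ(s)) · Y(0)`. -/
theorem stmt_14 (β : ℝ) (hβ : 0 < β)
    (w : ℝ → EuclideanSpace ℝ (Fin 2)) (hw : ContDiff ℝ 2 w)
    (hODE : ∀ s : ℝ, deriv (deriv w) s = β ^ 2 • w s)
    (W : ℝ) (hWdef : W = (w 0) 0 * (deriv w 0) 1 - (w 0) 1 * (deriv w 0) 0)
    (hW : W ≠ 0)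
    (c : ℝ) (hc0 : 0 < c)
    (hc : c ^ 2 = 1 - ‖w 0‖ ^ 2 + β⁻¹ ^ 2 * ‖deriv w 0‖ ^ 2)
    (q : ℝ) (hq : q = W ^ 2 / (c ^ 2 * β ^ 2))
    (s : ℝ) (hs : 0 < s)
    (hw1 : ∀ σ ∈ Set.Icc 0 s, ‖w σ‖ ≤ 1)
    (hwq : ∀ σ ∈ Set.Icc 0 s, q < ‖w σ‖ ^ 2)
    (A : ℝ → Matrix (Fin 2) (Fin 2) ℝ)
    (hA : ∀ σ : ℝ, A σ = (‖w σ‖ ^ 2 - q)⁻¹ •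
      !![(inner ℝ (w σ) (deriv w σ) : ℝ),
          -(W / (c * β)) * Real.sqrt (c ^ 2 * β ^ 2 - ‖deriv w σ‖ ^ 2);
         (W / (c * β)) * Real.sqrt (c ^ 2 * β ^ 2 - ‖deriv w σ‖ ^ 2),
          (inner ℝ (w σ) (deriv w σ) : ℝ)])
    (φ : ℝ → ℝ)
    (hφ : ∀ t : ℝ, φ t = ∫ σ in (0:ℝ)..t,
      (W / (c * β)) * Real.sqrt (c ^ 2 * β ^ 2 - ‖deriv w σ‖ ^ 2) / (‖w σ‖ ^ 2 - q))
    (Y : ℝ → Fin 2 → ℝ)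
    (hY : ∀ σ ∈ Set.Icc 0 s, HasDerivWithinAt Y ((A σ).mulVec (Y σ)) (Set.Icc 0 s) σ) :
    Y s = (Real.sqrt ((‖w s‖ ^ 2 - q) / (‖w 0‖ ^ 2 - q)) •
        !![Real.cos (φ s), -Real.sin (φ s); Real.sin (φ s), Real.cos (φ s)]).mulVec
      (Y 0) :=
  stmt_14_general β w hw W c q s hs hwq A hA φ hφ Y hY
end
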